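/- arXiv:1810.00624 — 10 statements merged into one kernel-verified Lean document; each statement's English description precedes it below -/
import Mathlib

section
/- Let G be a finite simple graph with minimum degree at least 3, and let C be an edge 2-coloring of G. Then there exists a characteristic subgraph χ of G with respect to C that is a disjoint union of paths, i.e., χ has maximum degree at most 2 and contains no cycle. -/
open SimpleGraph

/-- `C` is an edge 2-coloring of `G`: for every vertex, the edges incident to it
carry at most 2 distinct colors. -/
def IsEdge2Coloring {V : Type*} (G : SimpleGraph V) (C : Sym2 V → ℕ) : Prop :=
  ∀ v : V, (C '' G.incidenceSet v).ncard ≤ 2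

/-- The number of distinct colors used by a coloring `C` on the edges of `G`. -/
noncomputable def numColors {V : Type*} (G : SimpleGraph V) (C : Sym2 V → ℕ) : ℕ :=
  (C '' G.edgeSet).ncard

/-- `OPT G`: the maximum number of colors used by an edge 2-coloring of `G`. -/
noncomputable def OPT {V : Type*} (G : SimpleGraph V) : ℕ :=
  sSup {n : ℕ | ∃ C : Sym2 V → ℕ, IsEdge2Coloring G C ∧ numColors G C = n}

/-- `M` is a matching of `G`, given as a set of edges: the edges belong to `G` and
are pairwise vertex-disjoint. -/
def IsMatchingSet {V : Type*} (G : SimpleGraph V) (M : Set (Sym2 V)) : Prop :=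
  M ⊆ G.edgeSet ∧ ∀ e ∈ M, ∀ f ∈ M, e ≠ f → ∀ v : V, v ∈ e → v ∉ f

/-- `ALG G M`: number of colors produced by the matching based algorithm, i.e.
`|M|` plus the number of connected components of `G − M`. -/
noncomputable def ALG {V : Type*} (G : SimpleGraph V) (M : Set (Sym2 V)) : ℕ :=
  M.ncard + Nat.card (G.deleteEdges M).ConnectedComponent

/-- `H` is a characteristic subgraph of `G` with respect to the coloring `C`:
a subgraph of `G` containing exactly one edge of each color used by `C`. -/
def IsCharSubgraph {V : Type*} (G : SimpleGraph V) (C : Sym2 V → ℕ)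
    (H : SimpleGraph V) : Prop :=
  H ≤ G ∧ ∀ c ∈ C '' G.edgeSet, ∃! e, e ∈ H.edgeSet ∧ C e = c

/-!
Among all characteristic subgraphs take one, `H`, with the fewest connected components. The edges
of `H` have distinct colors and at most two colors meet at a vertex, so `H` has maximum degree at
most 2. If `H` contained a cycle through `v`, a third edge `vw` of `G` at `v` would share its color
with one of the two cycle edges at `v`. The vertex `w` is off the cycle, because a vertex of degree
2 in `H` already carries both of its colors in `H`. Exchanging that cycle edge for `vw` therefore
gives a characteristic subgraph with one component fewer.
-/

namespace SimpleGraph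

variable {V : Type*} {G G' : SimpleGraph V}

theorem reachable_deleteEdges_iff_of_not_isBridge {e : Sym2 V} (he : ¬ G.IsBridge e) {u v : V} :
    (G.deleteEdges {e}).Reachable u v ↔ G.Reachable u v := by
  refine ⟨fun h => h.mono (deleteEdges_le _), fun h => ?_⟩
  have hstep : ∀ x y, G.Adj x y → (G.deleteEdges {e}).Reachable x y := by
    intro x y hxy
    by_cases hxe : s(x, y) = e
    · subst hxe
      exact not_not.1 he
    · exact Adj.reachable (deleteEdges_adj.2 ⟨hxy, hxe⟩)
  obtain ⟨q⟩ := h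
  induction q with
  | nil => rfl
  | cons hadj _ ih => exact (hstep _ _ hadj).trans ih

theorem card_connectedComponent_deleteEdges_of_not_isBridge {e : Sym2 V} (he : ¬ G.IsBridge e) :
    Nat.card (G.deleteEdges {e}).ConnectedComponent = Nat.card G.ConnectedComponent := by
  refine Nat.card_eq_of_bijective _ ⟨?_, ConnectedComponent.surjective_map_ofLE (deleteEdges_le _)⟩
  refine ConnectedComponent.ind₂ fun x y hxy => ?_
  exact ConnectedComponent.sound
    ((reachable_deleteEdges_iff_of_not_isBridge he).2 (ConnectedComponent.exact hxy))

theorem card_connectedComponent_lt_of_adj_of_not_reachable [Finite V] (hle : G ≤ G') {u v : V}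
    (hadj : G'.Adj u v) (hreach : ¬ G.Reachable u v) :
    Nat.card G'.ConnectedComponent < Nat.card G.ConnectedComponent := by
  have := Fintype.ofFinite G.ConnectedComponent
  have := Fintype.ofFinite G'.ConnectedComponent
  simp only [Nat.card_eq_fintype_card]
  refine Fintype.card_lt_of_surjective_not_injective _ (ConnectedComponent.surjective_map_ofLE hle)
    fun hinj => hreach (ConnectedComponent.exact (hinj ?_))
  exact ConnectedComponent.sound hadj.reachable

namespace Walk.IsCycle

variable [Finite V] {u x y : V} {p : G.Walk u u}

theorem neighborSet_toSubgraph_eq (hdeg : ∀ x, (G.neighborSet x).ncard ≤ 2) (hp : p.IsCycle)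
    (hx : x ∈ p.support) : p.toSubgraph.neighborSet x = G.neighborSet x :=
  Set.eq_of_subset_of_ncard_le (p.toSubgraph.neighborSet_subset x)
    (by rw [hp.ncard_neighborSet_toSubgraph_eq_two hx]; exact hdeg x)

theorem ncard_neighborSet_eq_two (hdeg : ∀ x, (G.neighborSet x).ncard ≤ 2) (hp : p.IsCycle)
    (hx : x ∈ p.support) : (G.neighborSet x).ncard = 2 := by
  rw [← hp.neighborSet_toSubgraph_eq hdeg hx, hp.ncard_neighborSet_toSubgraph_eq_two hx]

theorem adj_toSubgraph_iff (hdeg : ∀ x, (G.neighborSet x).ncard ≤ 2) (hp : p.IsCycle)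
    (hx : x ∈ p.support) : p.toSubgraph.Adj x y ↔ G.Adj x y := by
  rw [← Subgraph.mem_neighborSet, hp.neighborSet_toSubgraph_eq hdeg hx, mem_neighborSet]

theorem mem_support_of_reachable (hdeg : ∀ x, (G.neighborSet x).ncard ≤ 2) (hp : p.IsCycle)
    (hx : x ∈ p.support) (hxy : G.Reachable x y) : y ∈ p.support := by
  obtain ⟨q⟩ := hxy
  induction q with
  | nil => exact hx
  | @cons a b _ hadj _ ih =>
    exact ih (p.snd_mem_support_of_mem_edges (t := a)
      (Walk.adj_toSubgraph_iff_mem_edges.1 ((hp.adj_toSubgraph_iff hdeg hx).2 hadj)))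

end Walk.IsCycle

end SimpleGraph

namespace IsCharSubgraph

variable {V : Type*} {G H : SimpleGraph V} {C : Sym2 V → ℕ}

theorem injOn (hH : IsCharSubgraph G C H) : Set.InjOn C H.edgeSet := by
  intro e he f hf hef
  obtain ⟨_, _, huniq⟩ := hH.2 (C e) ⟨e, edgeSet_mono hH.1 he, rfl⟩
  rw [huniq e ⟨he, rfl⟩, huniq f ⟨hf, hef.symm⟩]

theorem ncard_image_incidenceSet (hH : IsCharSubgraph G C H) (x : V) :
    (C '' H.incidenceSet x).ncard = (H.neighborSet x).ncard := by
  classical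
  rw [(hH.injOn.mono (H.incidenceSet_subset x)).ncard_image]
  exact Set.ncard_congr' (H.incidenceSetEquivNeighborSet x)

theorem image_incidenceSet_subset (hH : IsCharSubgraph G C H) (x : V) :
    C '' H.incidenceSet x ⊆ C '' G.incidenceSet x :=
  Set.image_mono fun _ he => ⟨edgeSet_mono hH.1 he.1, he.2⟩

theorem ncard_neighborSet_le_two [Finite V] (hC : IsEdge2Coloring G C)
    (hH : IsCharSubgraph G C H) (x : V) : (H.neighborSet x).ncard ≤ 2 := by
  rw [← hH.ncard_image_incidenceSet x]
  exact (Set.ncard_le_ncard (hH.image_incidenceSet_subset x)).trans (hC x)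

/-- The two edges of `H` at `x` already carry both colors at `x`. -/
theorem mem_of_ncard_neighborSet_eq_two [Finite V] (hC : IsEdge2Coloring G C)
    (hH : IsCharSubgraph G C H) {x : V} (hx : (H.neighborSet x).ncard = 2) {e f : Sym2 V}
    (he : e ∈ H.edgeSet) (hf : f ∈ G.incidenceSet x) (hef : C e = C f) : x ∈ e := by
  have himage : C '' H.incidenceSet x = C '' G.incidenceSet x :=
    Set.eq_of_subset_of_ncard_le (hH.image_incidenceSet_subset x)
      (by rw [hH.ncard_image_incidenceSet, hx]; exact hC x)
  obtain ⟨e', he', hce'⟩ : C f ∈ C '' H.incidenceSet x := himage ▸ Set.mem_image_of_mem C hf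
  rw [← hH.injOn he'.1 he (hce'.trans hef.symm)]
  exact he'.2

theorem deleteEdges_sup_edge (hH : IsCharSubgraph G C H) {e : Sym2 V} (he : e ∈ H.edgeSet)
    {v w : V} (hvw : G.Adj v w) (hc : C s(v, w) = C e) :
    IsCharSubgraph G C (H.deleteEdges {e} ⊔ edge v w) := by
  refine ⟨sup_le ((deleteEdges_le _).trans hH.1) ((edge_le_iff _).2 (Or.inr hvw)), fun c hc' => ?_⟩
  simp only [edgeSet_sup, edgeSet_deleteEdges, edgeSet_edge_of_ne hvw.ne, Set.mem_union,
    Set.mem_sdiff, Set.mem_singleton_iff]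
  obtain ⟨e₁, ⟨he₁, rfl⟩, huniq⟩ := hH.2 c hc'
  by_cases h : e₁ = e
  · subst h
    refine ⟨s(v, w), ⟨Or.inr rfl, hc⟩, ?_⟩
    rintro y ⟨⟨hy, hye⟩ | rfl, hyc⟩
    · exact absurd (huniq y ⟨hy, hyc⟩) hye
    · rfl
  · refine ⟨e₁, ⟨Or.inl ⟨he₁, h⟩, rfl⟩, ?_⟩
    rintro y ⟨⟨hy, -⟩ | rfl, hyc⟩
    · exact huniq y ⟨hy, hyc⟩
    · exact absurd (huniq e ⟨he, hc.symm.trans hyc⟩).symm h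

end IsCharSubgraph

theorem exists_isCharSubgraph {V : Type*} (G : SimpleGraph V) (C : Sym2 V → ℕ) :
    ∃ H : SimpleGraph V, IsCharSubgraph G C H := by
  obtain ⟨S, hSG, hbij⟩ := Set.exists_subset_bijOn G.edgeSet C
  have hS : (fromEdgeSet S).edgeSet = S := by
    rw [edgeSet_fromEdgeSet, sdiff_eq_left, Set.disjoint_left]
    exact fun e he => G.not_isDiag_of_mem_edgeSet (hSG he)
  refine ⟨fromEdgeSet S, edgeSet_subset_edgeSet.1 (by rwa [hS]), fun c hc => ?_⟩
  obtain ⟨e, he, rfl⟩ := hbij.surjOn hc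
  exact ⟨e, ⟨by rwa [hS], rfl⟩, fun f ⟨hf, hfe⟩ => hbij.injOn (by rwa [← hS]) he hfe⟩

theorem IsCharSubgraph.exists_card_connectedComponent_lt {V : Type*} [Finite V]
    {G H : SimpleGraph V} {C : Sym2 V → ℕ} (hδ : ∀ v : V, 3 ≤ (G.neighborSet v).ncard)
    (hC : IsEdge2Coloring G C) (hH : IsCharSubgraph G C H) (hcyc : ¬ H.IsAcyclic) :
    ∃ H' : SimpleGraph V, IsCharSubgraph G C H' ∧
      Nat.card H'.ConnectedComponent < Nat.card H.ConnectedComponent := by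
  have hdeg := hH.ncard_neighborSet_le_two hC
  obtain ⟨v, p, hp⟩ : ∃ v, ∃ p : H.Walk v v, p.IsCycle := by simpa [IsAcyclic] using hcyc
  have hv := p.start_mem_support
  obtain ⟨w, hvw, hvw'⟩ : ∃ w, w ∈ G.neighborSet v ∧ w ∉ H.neighborSet v :=
    Set.exists_mem_notMem_of_ncard_lt_ncard
      ((hp.ncard_neighborSet_eq_two hdeg hv).trans_lt (hδ v))
  obtain ⟨e, ⟨he, hce⟩, -⟩ := hH.2 (C s(v, w)) ⟨_, hvw, rfl⟩
  obtain ⟨u, rfl⟩ := Sym2.mem_iff_exists.1 <| hH.mem_of_ncard_neighborSet_eq_two hC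
    (hp.ncard_neighborSet_eq_two hdeg hv) he (G.mk'_mem_incidenceSet_left_iff.2 hvw) hce
  have hw : w ∉ p.support := by
    intro hw
    rcases Sym2.mem_iff.1 <| hH.mem_of_ncard_neighborSet_eq_two hC
      (hp.ncard_neighborSet_eq_two hdeg hw) he (G.mk'_mem_incidenceSet_right_iff.2 hvw) hce
      with rfl | rfl
    · exact hvw.ne rfl
    · exact hvw' he
  have hbridge : ¬ H.IsBridge s(v, u) := fun hb => hb.notMem_edges_of_isCycle hp
    (Walk.adj_toSubgraph_iff_mem_edges.1 ((hp.adj_toSubgraph_iff hdeg hv).2 he))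
  refine ⟨_, hH.deleteEdges_sup_edge he hvw hce.symm, ?_⟩
  rw [← card_connectedComponent_deleteEdges_of_not_isBridge hbridge]
  exact card_connectedComponent_lt_of_adj_of_not_reachable le_sup_left
    (Or.inr ((edge_adj _ _ _ _).2 ⟨Or.inl ⟨rfl, rfl⟩, hvw.ne⟩))
    fun h => hw (hp.mem_support_of_reachable hdeg hv (h.mono (deleteEdges_le _)))

/-- For a graph with minimum degree at least 3 and an edge 2-coloring `C`, there is a
characteristic subgraph which is a disjoint union of paths (max degree ≤ 2 and acyclic). -/
theorem exists_path_union_char_subgraph {V : Type*} [Fintype V] (G : SimpleGraph V)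
    (hδ : ∀ v : V, 3 ≤ (G.neighborSet v).ncard)
    (C : Sym2 V → ℕ) (hC : IsEdge2Coloring G C) :
    ∃ H : SimpleGraph V, IsCharSubgraph G C H ∧
      (∀ v : V, (H.neighborSet v).ncard ≤ 2) ∧ H.IsAcyclic := by
  obtain ⟨H, hH⟩ := exists_isCharSubgraph G C
  induction hn : Nat.card H.ConnectedComponent using Nat.strong_induction_on generalizing H with
  | _ n ih =>
    by_cases hacyc : H.IsAcyclic
    · exact ⟨H, hH, hH.ncard_neighborSet_le_two hC, hacyc⟩
    · obtain ⟨H', hH', hlt⟩ := hH.exists_card_connectedComponent_lt hδ hC hacyc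
      exact ih _ (hn ▸ hlt) H' hH' rfl
end

section
/- Let G be a finite simple graph on n vertices with minimum degree δ ≥ 3. Then every edge 2-coloring of G uses at most (n/2)·(1 + 2/δ) colors; equivalently, if c is the number of colors of an edge 2-coloring of G, then 2·c·δ ≤ n·(δ + 2). -/
/-!
Let `S_i` be the set of vertices touched by color `i`. Counting every pair (vertex `v`, color
`i` at `v`) with weight `1/|S_i|` gives exactly the number of colors. At a vertex with a single
color `i` we have `|S_i| ≥ 2`. At a vertex `v` with two colors `i, j`, the classes `S_i` and `S_j`
both contain `v` and together all of its neighbors, so `|S_i| + |S_j| ≥ δ + 2` with both at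
least `2`; under these constraints `1/|S_i| + 1/|S_j|` is largest at `(2, δ)`, giving
`1/2 + 1/δ`. Summing over the `n` vertices gives the bound.
-/

open SimpleGraph

open Finset

theorem two_mul_mul_inv_add_inv_le {δ x y : ℚ} (hδ : 0 ≤ δ) (hx : 2 ≤ x) (hy : 2 ≤ y)
    (hxy : δ + 2 ≤ x + y) : 2 * δ * (x⁻¹ + y⁻¹) ≤ δ + 2 := by
  rw [inv_add_inv (by positivity) (by positivity), mul_div_assoc', div_le_iff₀ (by positivity)]
  -- `(δ + 2)xy - 2δ(x + y) = 4((x - 2) + (y - 2) - (δ - 2)) + (δ + 2)(x - 2)(y - 2)`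
  nlinarith [mul_nonneg (mul_nonneg (sub_nonneg.2 hx) (sub_nonneg.2 hy)) (by linarith : 0 ≤ δ + 2)]

theorem card_biUnion_eq_sum_sum_inv_card {α ι K : Type*} [Fintype α] [DecidableEq ι]
    [DivisionSemiring K] [CharZero K] (P : α → Finset ι) :
    (#(univ.biUnion P) : K) = ∑ a, ∑ i ∈ P a, (#{b | i ∈ P b} : K)⁻¹ := by
  rw [sum_comm' (t' := univ.biUnion P) (s' := fun i => {b | i ∈ P b})
    (by simpa using fun a i h => ⟨a, h⟩)]
  simp only [sum_const, nsmul_eq_mul]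
  rw [card_eq_sum_ones, Nat.cast_sum]
  refine sum_congr rfl fun i hi => ?_
  obtain ⟨a, -, ha⟩ := mem_biUnion.1 hi
  have : (#{b | i ∈ P b} : K) ≠ 0 := by
    exact_mod_cast (card_pos.2 ⟨a, by simpa using ha⟩).ne'
  rw [Nat.cast_one, mul_inv_cancel₀ this]

namespace SimpleGraph

variable {V α : Type*} [Fintype V] (G : SimpleGraph V) [DecidableRel G.Adj] [DecidableEq α]
  (C : Sym2 V → α)

def palette (v : V) : Finset α :=
  (G.neighborFinset v).image fun u => C s(v, u)

def colorSupport (i : α) : Finset V :=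
  {v | i ∈ G.palette C v}

variable {G C}

theorem mem_palette {v : V} {i : α} : i ∈ G.palette C v ↔ ∃ u, G.Adj v u ∧ C s(v, u) = i := by
  simp [palette]

theorem coe_palette (v : V) : (G.palette C v : Set α) = C '' G.incidenceSet v := by
  ext i
  simp only [mem_coe, mem_palette, Set.mem_image]
  constructor
  · rintro ⟨u, hadj, rfl⟩
    exact ⟨s(v, u), (G.mem_incidenceSet v u).2 hadj, rfl⟩
  · rintro ⟨e, he, rfl⟩
    induction e using Sym2.ind with
    | _ x y =>
      obtain ⟨hadj, rfl | rfl⟩ := G.mk'_mem_incidenceSet_iff.1 he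
      · exact ⟨y, hadj, rfl⟩
      · exact ⟨x, hadj.symm, congrArg C Sym2.eq_swap⟩

theorem two_le_card_colorSupport {v : V} {i : α} (hi : i ∈ G.palette C v) :
    2 ≤ #(G.colorSupport C i) := by
  obtain ⟨u, hadj, rfl⟩ := mem_palette.1 hi
  refine one_lt_card.2 ⟨v, ?_, u, ?_, hadj.ne⟩ <;>
    simp only [colorSupport, mem_filter, mem_univ, true_and, mem_palette]
  · exact ⟨u, hadj, rfl⟩
  · exact ⟨v, hadj.symm, by rw [Sym2.eq_swap]⟩

theorem degree_add_card_palette_le (v : V) :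
    G.degree v + #(G.palette C v) ≤ ∑ i ∈ G.palette C v, #(G.colorSupport C i) := by
  rw [← card_neighborFinset_eq_degree, card_eq_sum_card_image (fun u => C s(v, u)),
    ← palette, card_eq_sum_ones (G.palette C v), ← sum_add_distrib]
  refine sum_le_sum fun i hi => ?_
  have hv : v ∉ {u ∈ G.neighborFinset v | C s(v, u) = i} := by simp
  rw [← card_cons hv]
  refine card_le_card fun u hu => ?_
  simp only [colorSupport, mem_filter, mem_univ, true_and]
  obtain rfl | hu := mem_cons.1 hu
  · exact hi
  · simp only [mem_filter, mem_neighborFinset] at hu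
    exact mem_palette.2 ⟨v, hu.1.symm, by rw [Sym2.eq_swap, hu.2]⟩

theorem card_palette_le_two {C : Sym2 V → ℕ} (hC : IsEdge2Coloring G C) (v : V) :
    #(G.palette C v) ≤ 2 := by
  simpa only [← coe_palette, Set.ncard_coe_finset] using hC v

theorem numColors_eq_card_biUnion_palette (C : Sym2 V → ℕ) :
    numColors G C = #(univ.biUnion (G.palette C)) := by
  rw [numColors, ← Set.ncard_coe_finset, coe_biUnion, coe_univ]
  simp only [Set.mem_univ, Set.iUnion_true, coe_palette, ← Set.image_iUnion,
    G.iUnion_incidenceSet]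

theorem two_mul_sum_inv_card_colorSupport_le {C : Sym2 V → ℕ} (hC : IsEdge2Coloring G C)
    {δ : ℕ} {v : V} (hv : δ ≤ G.degree v) :
    2 * δ * ∑ i ∈ G.palette C v, (#(G.colorSupport C i) : ℚ)⁻¹ ≤ δ + 2 := by
  have hsupp {i} (hi : i ∈ G.palette C v) : (2 : ℚ) ≤ #(G.colorSupport C i) := by
    exact_mod_cast two_le_card_colorSupport hi
  obtain h | h | h : #(G.palette C v) = 0 ∨ #(G.palette C v) = 1 ∨ #(G.palette C v) = 2 := by
    have := card_palette_le_two hC v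
    omega
  · simp only [card_eq_zero.1 h, sum_empty, mul_zero]
    positivity
  · obtain ⟨i, hi⟩ := card_eq_one.1 h
    have hx := hsupp (hi ▸ mem_singleton_self i)
    rw [hi, sum_singleton]
    have : (#(G.colorSupport C i) : ℚ)⁻¹ ≤ 2⁻¹ := inv_anti₀ (by norm_num) hx
    nlinarith
  · obtain ⟨i, j, hij, hP⟩ := card_eq_two.1 h
    have hsum := degree_add_card_palette_le (G := G) (C := C) v
    rw [hP, sum_pair hij, card_pair hij] at hsum
    rw [hP, sum_pair hij]
    exact two_mul_mul_inv_add_inv_le (Nat.cast_nonneg δ) (hsupp (by simp [hP]))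
      (hsupp (by simp [hP])) (by exact_mod_cast (by omega : δ + 2 ≤ _))

end SimpleGraph

theorem numColors_le_of_minDegree_general {V : Type*} [Fintype V] (G : SimpleGraph V) (δ : ℕ)
    (hδ : ∀ v : V, δ ≤ (G.neighborSet v).ncard)
    (C : Sym2 V → ℕ) (hC : IsEdge2Coloring G C) :
    2 * numColors G C * δ ≤ Fintype.card V * (δ + 2) := by
  classical
  have hdeg (v : V) : δ ≤ G.degree v := by
    rw [← card_neighborFinset_eq_degree, neighborFinset_def, ← Set.ncard_eq_toFinset_card']
    exact hδ v
  have hcount : (numColors G C : ℚ) =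
      ∑ v, ∑ i ∈ G.palette C v, (#(G.colorSupport C i) : ℚ)⁻¹ := by
    rw [numColors_eq_card_biUnion_palette]
    exact card_biUnion_eq_sum_sum_inv_card _
  have : (2 * numColors G C * δ : ℚ) ≤ Fintype.card V * (δ + 2) :=
    calc (2 * numColors G C * δ : ℚ)
        = ∑ v, 2 * δ * ∑ i ∈ G.palette C v, (#(G.colorSupport C i) : ℚ)⁻¹ := by
          rw [← mul_sum, ← hcount]; ring
      _ ≤ ∑ _v : V, ((δ : ℚ) + 2) :=
          sum_le_sum fun v _ => two_mul_sum_inv_card_colorSupport_le hC (hdeg v)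
      _ = Fintype.card V * (δ + 2) := by rw [sum_const, card_univ, nsmul_eq_mul]
  exact_mod_cast this

/-- A graph on `n` vertices with minimum degree `δ ≥ 3` admits no edge 2-coloring with
more than `(n/2)(1 + 2/δ)` colors: `2·c·δ ≤ n·(δ + 2)`. -/
theorem numColors_le_of_minDegree {V : Type*} [Fintype V] (G : SimpleGraph V) (δ : ℕ)
    (hδ3 : 3 ≤ δ) (hδ : ∀ v : V, δ ≤ (G.neighborSet v).ncard)
    (C : Sym2 V → ℕ) (hC : IsEdge2Coloring G C) :
    2 * numColors G C * δ ≤ Fintype.card V * (δ + 2) :=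
  numColors_le_of_minDegree_general G δ hδ C hC
end

section
/- Let G be a finite simple graph on n vertices with minimum degree δ ≥ 3 that has a perfect matching M. Then OPT(G) ≤ (1 + 2/δ)·ALG(G, M). -/
open SimpleGraph

/-!
Let every color spread one unit of weight evenly over the vertices it touches, so that the
number of colors is the total weight received by the vertices. If a vertex sees colors `c` and
`d` on `m_c, m_d ≥ 1` of its `≥ δ` edges, the two colors touch at least `m_c + 1` and `m_d + 1`
vertices, so the vertex receives at most `1/(m_c + 1) + 1/(m_d + 1) ≤ 1/2 + 1/δ`. Hence
`OPT(G) ≤ n (1/2 + 1/δ)`, and `n ≤ 2 |M| ≤ 2 ALG(G, M)` because `M` covers every vertex.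
-/

open Finset

section ColorCounting

variable {V : Type*} [Fintype V] (G : SimpleGraph V) [DecidableRel G.Adj] (C : Sym2 V → ℕ)

def colorsAt (v : V) : Finset ℕ :=
  (G.neighborFinset v).image fun w => C s(v, w)

def colorVerts (c : ℕ) : Finset V :=
  {v | c ∈ colorsAt G C v}

def colorDegree (v : V) (c : ℕ) : ℕ :=
  #{w ∈ G.neighborFinset v | C s(v, w) = c}

variable {G C}

theorem coe_colorsAt (v : V) : (colorsAt G C v : Set ℕ) = C '' G.incidenceSet v := by
  ext c
  simp only [colorsAt, Finset.coe_image, coe_neighborFinset, Set.mem_image, mem_neighborSet]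
  constructor
  · rintro ⟨w, hw, rfl⟩
    exact ⟨s(v, w), (G.mem_incidenceSet v w).2 hw, rfl⟩
  · rintro ⟨e, he, rfl⟩
    obtain ⟨w, rfl⟩ := Sym2.mem_iff_exists.1 he.2
    exact ⟨w, (G.mem_incidenceSet v w).1 he, rfl⟩

theorem IsEdge2Coloring.card_colorsAt_le (hC : IsEdge2Coloring G C) (v : V) :
    #(colorsAt G C v) ≤ 2 := by
  simpa [← coe_colorsAt] using hC v

theorem sum_colorDegree (v : V) : ∑ c ∈ colorsAt G C v, colorDegree G C v c = G.degree v :=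
  (card_eq_sum_card_image _ _).symm

theorem colorDegree_pos {v : V} {c : ℕ} (hc : c ∈ colorsAt G C v) :
    0 < colorDegree G C v c := by
  obtain ⟨w, hw, rfl⟩ := mem_image.1 hc
  exact card_pos.2 ⟨w, mem_filter.2 ⟨hw, rfl⟩⟩

theorem colorDegree_lt_card_colorVerts {v : V} {c : ℕ} (hc : c ∈ colorsAt G C v) :
    colorDegree G C v c < #(colorVerts G C c) := by
  classical
  have hsub : insert v {w ∈ G.neighborFinset v | C s(v, w) = c} ⊆ colorVerts G C c := by
    intro w hw
    rw [colorVerts, mem_filter_univ]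
    rcases mem_insert.1 hw with rfl | hw
    · exact hc
    · obtain ⟨hvw, rfl⟩ := mem_filter.1 hw
      have hwv : v ∈ G.neighborFinset w := by simpa [G.adj_comm] using hvw
      exact mem_image.2 ⟨v, hwv, congrArg C Sym2.eq_swap⟩
  have hv : v ∉ {w ∈ G.neighborFinset v | C s(v, w) = c} := by simp
  simpa [colorDegree, card_insert_of_notMem hv] using card_le_card hsub

theorem colorsAt_subset_image_edgeFinset (v : V) : colorsAt G C v ⊆ G.edgeFinset.image C := by
  intro c hc
  obtain ⟨w, hw, rfl⟩ := mem_image.1 hc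
  exact mem_image_of_mem C (G.mem_edgeFinset.2 ((G.mem_neighborFinset v w).1 hw))

theorem numColors_eq_card_image : numColors G C = #(G.edgeFinset.image C) := by
  rw [numColors, ← Set.ncard_coe_finset, Finset.coe_image, coe_edgeFinset]

theorem colorVerts_nonempty {c : ℕ} (hc : c ∈ G.edgeFinset.image C) :
    (colorVerts G C c).Nonempty := by
  obtain ⟨e, he, rfl⟩ := mem_image.1 hc
  induction e using Sym2.ind with
  | _ x y =>
    have hy : y ∈ G.neighborFinset x := (G.mem_neighborFinset x y).2 (G.mem_edgeFinset.1 he)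
    exact ⟨x, (mem_filter_univ x).2 (mem_image.2 ⟨y, hy, rfl⟩)⟩

theorem card_image_edgeFinset_eq_sum_inv_card_colorVerts :
    (#(G.edgeFinset.image C) : ℝ) =
      ∑ v, ∑ c ∈ colorsAt G C v, (#(colorVerts G C c) : ℝ)⁻¹ := by
  calc (#(G.edgeFinset.image C) : ℝ)
      = ∑ c ∈ G.edgeFinset.image C,
          ∑ _v ∈ colorVerts G C c, (#(colorVerts G C c) : ℝ)⁻¹ := by
        rw [card_eq_sum_ones, Nat.cast_sum, Nat.cast_one]
        refine sum_congr rfl fun c hc => ?_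
        rw [sum_const, nsmul_eq_mul,
          mul_inv_cancel₀ (Nat.cast_ne_zero.2 (colorVerts_nonempty hc).card_pos.ne')]
    _ = ∑ v, ∑ c ∈ colorsAt G C v, (#(colorVerts G C c) : ℝ)⁻¹ :=
        sum_comm' fun c v => by
          simp only [colorVerts, mem_filter_univ, mem_univ, and_true]
          exact ⟨And.right, fun h => ⟨colorsAt_subset_image_edgeFinset v h, h⟩⟩

/-- The difference of the two sides is
`(a - 1) (b - 1) (a + b + 2) / (2 (a + b) (a + 1) (b + 1))`. -/
theorem inv_add_one_add_inv_add_one_le {a b : ℝ} (ha : 1 ≤ a) (hb : 1 ≤ b) :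
    (a + 1)⁻¹ + (b + 1)⁻¹ ≤ 2⁻¹ + (a + b)⁻¹ := by
  rw [inv_add_inv (by positivity) (by positivity), inv_add_inv (by positivity) (by positivity),
    div_le_div_iff₀ (by positivity) (by positivity)]
  nlinarith [mul_nonneg (mul_nonneg (sub_nonneg.2 ha) (sub_nonneg.2 hb))
    (by linarith : (0 : ℝ) ≤ a + b + 2)]

theorem sum_inv_add_one_le {ι : Type*} {s : Finset ι} {m : ι → ℕ} {δ : ℕ} (hs : #s ≤ 2)
    (hm : ∀ i ∈ s, 0 < m i) (hδ : 0 < δ) (hsum : δ ≤ ∑ i ∈ s, m i) :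
    ∑ i ∈ s, ((m i : ℝ) + 1)⁻¹ ≤ 2⁻¹ + (δ : ℝ)⁻¹ := by
  have hδ' : (0 : ℝ) < δ := by exact_mod_cast hδ
  interval_cases h : #s
  · simp only [card_eq_zero.1 h, sum_empty]
    positivity
  · obtain ⟨i, rfl⟩ := card_eq_one.1 h
    have : (1 : ℝ) ≤ m i := by exact_mod_cast hm i (mem_singleton_self i)
    rw [sum_singleton]
    calc ((m i : ℝ) + 1)⁻¹ ≤ 2⁻¹ := by gcongr; linarith
      _ ≤ 2⁻¹ + (δ : ℝ)⁻¹ := le_add_of_nonneg_right (by positivity)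
  · classical
    obtain ⟨i, j, hij, rfl⟩ := card_eq_two.1 h
    rw [sum_pair hij] at hsum ⊢
    have hi : (1 : ℝ) ≤ m i := by exact_mod_cast hm i (by simp)
    have hj : (1 : ℝ) ≤ m j := by exact_mod_cast hm j (by simp)
    have hδij : (δ : ℝ) ≤ m i + m j := by exact_mod_cast hsum
    calc ((m i : ℝ) + 1)⁻¹ + ((m j : ℝ) + 1)⁻¹ ≤ 2⁻¹ + ((m i : ℝ) + m j)⁻¹ :=
          inv_add_one_add_inv_add_one_le hi hj
      _ ≤ 2⁻¹ + (δ : ℝ)⁻¹ := by gcongr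

theorem IsEdge2Coloring.sum_inv_card_colorVerts_le (hC : IsEdge2Coloring G C) {δ : ℕ}
    (hδ : 0 < δ) {v : V} (hv : δ ≤ G.degree v) :
    ∑ c ∈ colorsAt G C v, (#(colorVerts G C c) : ℝ)⁻¹ ≤ 2⁻¹ + (δ : ℝ)⁻¹ :=
  calc ∑ c ∈ colorsAt G C v, (#(colorVerts G C c) : ℝ)⁻¹
      ≤ ∑ c ∈ colorsAt G C v, ((colorDegree G C v c : ℝ) + 1)⁻¹ := by
        refine sum_le_sum fun c hc => ?_
        have := colorDegree_lt_card_colorVerts hc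
        gcongr
        exact_mod_cast this
    _ ≤ 2⁻¹ + (δ : ℝ)⁻¹ :=
        sum_inv_add_one_le (hC.card_colorsAt_le v) (fun _ => colorDegree_pos) hδ
          (by rwa [sum_colorDegree])

theorem IsEdge2Coloring.numColors_le (hC : IsEdge2Coloring G C) {δ : ℕ} (hδ : 0 < δ)
    (hdeg : ∀ v, δ ≤ G.degree v) :
    (numColors G C : ℝ) ≤ Fintype.card V * (2⁻¹ + (δ : ℝ)⁻¹) := by
  rw [numColors_eq_card_image, card_image_edgeFinset_eq_sum_inv_card_colorVerts]
  calc ∑ v, ∑ c ∈ colorsAt G C v, (#(colorVerts G C c) : ℝ)⁻¹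
      ≤ ∑ _v : V, (2⁻¹ + (δ : ℝ)⁻¹) :=
        sum_le_sum fun v _ => hC.sum_inv_card_colorVerts_le hδ (hdeg v)
    _ = Fintype.card V * (2⁻¹ + (δ : ℝ)⁻¹) := by rw [sum_const, card_univ, nsmul_eq_mul]

end ColorCounting

theorem isEdge2Coloring_const {V : Type*} (G : SimpleGraph V) (c : ℕ) :
    IsEdge2Coloring G fun _ => c := fun _ =>
  (Set.ncard_le_ncard (t := ({c} : Set ℕ)) (Set.image_subset_iff.2 fun _ _ => rfl)).trans
    (by simp)

theorem exists_isEdge2Coloring_numColors_eq_OPT {V : Type*} [Finite V] (G : SimpleGraph V) :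
    ∃ C, IsEdge2Coloring G C ∧ numColors G C = OPT G :=
  Nat.sSup_mem (s := {n | ∃ C, IsEdge2Coloring G C ∧ numColors G C = n})
    ⟨_, _, isEdge2Coloring_const G 0, rfl⟩
    ⟨G.edgeSet.ncard, by
      rintro _ ⟨C, -, rfl⟩
      exact Set.ncard_image_le G.edgeSet.toFinite⟩

theorem card_le_two_mul_ncard_of_forall_exists_mem {V : Type*} [Fintype V] {M : Set (Sym2 V)}
    (hM : ∀ v, ∃ e ∈ M, v ∈ e) : Fintype.card V ≤ 2 * M.ncard := by
  classical
  calc Fintype.card V = #(univ : Finset V) := card_univ.symm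
    _ ≤ #(M.toFinset.biUnion Sym2.toFinset) := card_le_card fun v _ => by simpa using hM v
    _ ≤ ∑ e ∈ M.toFinset, #e.toFinset := card_biUnion_le
    _ ≤ ∑ _e ∈ M.toFinset, 2 :=
        sum_le_sum fun e _ => by rw [Sym2.card_toFinset]; split <;> omega
    _ = 2 * M.ncard := by rw [sum_const, smul_eq_mul, mul_comm, Set.ncard_eq_toFinset_card']

theorem opt_le_alg_perfectMatching_general {V : Type*} [Fintype V] (G : SimpleGraph V) (δ : ℕ)
    (hδ3 : 3 ≤ δ) (hδ : ∀ v : V, δ ≤ (G.neighborSet v).ncard)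
    (M : Set (Sym2 V)) (hMperf : ∀ v : V, ∃ e ∈ M, v ∈ e) :
    (OPT G : ℝ) ≤ (1 + 2 / (δ : ℝ)) * (ALG G M : ℝ) := by
  classical
  obtain ⟨C, hC, hCopt⟩ := exists_isEdge2Coloring_numColors_eq_OPT G
  have hdeg : ∀ v, δ ≤ G.degree v := fun v => by
    rw [← card_neighborFinset_eq_degree, ← Set.ncard_coe_finset, coe_neighborFinset]
    exact hδ v
  have hcover : (Fintype.card V : ℝ) ≤ 2 * M.ncard := by
    exact_mod_cast card_le_two_mul_ncard_of_forall_exists_mem hMperf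
  have hALG : (M.ncard : ℝ) ≤ ALG G M := by exact_mod_cast Nat.le_add_right _ _
  calc (OPT G : ℝ) = numColors G C := by rw [hCopt]
    _ ≤ Fintype.card V * (2⁻¹ + (δ : ℝ)⁻¹) := hC.numColors_le (by omega) hdeg
    _ ≤ 2 * M.ncard * (2⁻¹ + (δ : ℝ)⁻¹) := by gcongr
    _ = (1 + 2 / (δ : ℝ)) * M.ncard := by ring
    _ ≤ (1 + 2 / (δ : ℝ)) * ALG G M := by gcongr

/-- For a graph with minimum degree `δ ≥ 3` and a perfect matching `M`,
`OPT(G) ≤ (1 + 2/δ)·ALG(G, M)`. -/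
theorem opt_le_alg_perfectMatching {V : Type*} [Fintype V] (G : SimpleGraph V) (δ : ℕ)
    (hδ3 : 3 ≤ δ) (hδ : ∀ v : V, δ ≤ (G.neighborSet v).ncard)
    (M : Set (Sym2 V)) (hM : IsMatchingSet G M) (hMperf : ∀ v : V, ∃ e ∈ M, v ∈ e) :
    (OPT G : ℝ) ≤ (1 + 2 / (δ : ℝ)) * (ALG G M : ℝ) :=
  opt_le_alg_perfectMatching_general G δ hδ3 hδ M hMperf
end

section
/- Let G be a finite simple triangle-free graph on n vertices with minimum degree δ ≥ 3 that has a perfect matching M. Then OPT(G) ≤ (1 + 1/(δ − 1))·ALG(G, M). -/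
open SimpleGraph

/-- helper: a finset of naturals with at most 2 elements cannot contain three
pairwise distinct elements. -/
lemma two_mem_aux {s : Finset ℕ} (hs : s.card ≤ 2) {x y z : ℕ} (hx : x ∈ s) (hy : y ∈ s)
    (hz : z ∈ s) (hxz : x ≠ z) (hyz : y ≠ z) : x = y := by
  by_contra hxy
  have hsub : ({x, y, z} : Finset ℕ) ⊆ s := by
    intro w hw
    simp only [Finset.mem_insert, Finset.mem_singleton] at hw
    rcases hw with rfl | rfl | rfl <;> assumption
  have h3 : ({x, y, z} : Finset ℕ).card = 3 := by
    rw [Finset.card_insert_of_notMem (by simp [hxy, hxz]),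
      Finset.card_insert_of_notMem (by simp [hyz]), Finset.card_singleton]
  have := Finset.card_le_card hsub
  omega

lemma key_bound {V : Type*} [Fintype V] (G : SimpleGraph V)
    (hfree : G.CliqueFree 3) (δ : ℕ) (hδ3 : 3 ≤ δ)
    (hδ : ∀ v : V, δ ≤ (G.neighborSet v).ncard)
    (M : Set (Sym2 V)) (hM : IsMatchingSet G M) (hMperf : ∀ v : V, ∃ e ∈ M, v ∈ e)
    (C : Sym2 V → ℕ) (hC : IsEdge2Coloring G C) :
    2 * (δ - 1) * numColors G C ≤ 2 * δ * M.ncard := by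
  classical
  obtain ⟨D, rfl⟩ : ∃ D, δ = D + 2 := ⟨δ - 2, by omega⟩
  have hδ1 : (D + 2) - 1 = D + 1 := by omega
  rw [hδ1]
  -- trivial case: no vertices
  rcases isEmpty_or_nonempty V with hV | hV
  · have hE : G.edgeSet = ∅ := by
      ext e
      induction e using Sym2.ind with
      | _ x y => exact (hV.false x).elim
    simp [numColors, hE]
  · inhabit V
    -- matching partner structure
    obtain ⟨Medge, hMedge⟩ : ∃ f : V → Sym2 V, ∀ v, f v ∈ M ∧ v ∈ f v :=
      ⟨fun v => (hMperf v).choose, fun v => (hMperf v).choose_spec⟩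
    have hMuniq : ∀ v e, e ∈ M → v ∈ e → e = Medge v := by
      intro v e he hv
      by_contra hne
      exact hM.2 e he (Medge v) (hMedge v).1 hne v hv (hMedge v).2
    have hMedgeE : ∀ v, Medge v ∈ G.edgeSet := fun v => hM.1 (hMedge v).1
    obtain ⟨p, hp⟩ : ∃ p : V → V, ∀ v, s(v, p v) = Medge v :=
      ⟨fun v => Sym2.Mem.other (hMedge v).2, fun v => Sym2.other_spec _⟩
    have hpadj : ∀ v, G.Adj v (p v) := by
      intro v; rw [← G.mem_edgeSet, hp v]; exact hMedgeE v
    -- finsets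
    set MF : Finset (Sym2 V) := (Set.toFinite M).toFinset with hMFdef
    set EF : Finset (Sym2 V) := (Set.toFinite G.edgeSet).toFinset with hEFdef
    set CE : Finset ℕ := EF.image C with hCEdef
    set CM : Finset ℕ := MF.image C with hCMdef
    have hMFmem : ∀ e, e ∈ MF ↔ e ∈ M := fun e => Set.Finite.mem_toFinset _
    have hEFmem : ∀ e, e ∈ EF ↔ e ∈ G.edgeSet := fun e => Set.Finite.mem_toFinset _
    have hknum : numColors G C = CE.card := by
      rw [numColors, hCEdef, ← Set.Finite.coe_toFinset (Set.toFinite G.edgeSet),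
        ← Finset.coe_image, Set.ncard_coe_finset, hEFdef]
    have hMn : M.ncard = MF.card := Set.ncard_eq_toFinset_card _ _
    rw [hknum, hMn]
    -- palettes
    set PAL : V → Finset ℕ := fun v => ((G.incidenceSet v).toFinite.toFinset).image C
      with hPALdef
    have hPALcard : ∀ v, (PAL v).card ≤ 2 := by
      intro v
      have h := hC v
      rwa [← Set.Finite.coe_toFinset (G.incidenceSet v).toFinite, ← Finset.coe_image,
        Set.ncard_coe_finset] at h
    have hPALmem : ∀ v e, e ∈ G.edgeSet → v ∈ e → C e ∈ PAL v := by
      intro v e he hv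
      simp only [hPALdef, Finset.mem_image]
      exact ⟨e, (Set.Finite.mem_toFinset _).mpr ⟨he, hv⟩, rfl⟩
    set μ : V → ℕ := fun v => C (Medge v) with hμdef
    have hμPAL : ∀ v, μ v ∈ PAL v := fun v => hPALmem v (Medge v) (hMedgeE v) (hMedge v).2
    have hμCM : ∀ v, μ v ∈ CM := by
      intro v
      exact Finset.mem_image.mpr ⟨Medge v, (hMFmem _).mpr (hMedge v).1, rfl⟩
    -- representative edges for matched colors
    obtain ⟨rep, hrep⟩ : ∃ rep : ℕ → Sym2 V, ∀ m ∈ CM, rep m ∈ MF ∧ C (rep m) = m := by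
      have hex : ∀ m ∈ CM, ∃ e, e ∈ MF ∧ C e = m := by
        intro m hm
        obtain ⟨e, he, hce⟩ := Finset.mem_image.mp hm
        exact ⟨e, he, hce⟩
      choose f hf using hex
      refine ⟨fun m => if h : m ∈ CM then f m h else Medge default, ?_⟩
      intro m hm
      simp only [dif_pos hm]
      exact hf m hm
    set Free : V → Prop := fun v => rep (μ v) ≠ Medge v with hFreedef
    set FS : Finset V := Finset.univ.filter Free with hFSdef
    have hFSmem : ∀ v, v ∈ FS ↔ Free v := by
      intro v; simp [hFSdef]
    have hnonfree : ∀ v, ¬ Free v → rep (μ v) = Medge v := by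
      intro v hv
      simp only [hFreedef, not_not, ne_eq] at hv
      exact hv
    -- |FS| + 2|CM| ≤ 2|MF|
    set REPS : Finset (Sym2 V) := MF.filter (fun e => rep (C e) = e) with hREPSdef
    have hREPScard : REPS.card = CM.card := by
      have himg : REPS.image C = CM := by
        apply Finset.Subset.antisymm
        · intro m hm
          obtain ⟨e, he, hce⟩ := Finset.mem_image.mp hm
          exact hce ▸ Finset.mem_image.mpr ⟨e, (Finset.mem_filter.mp he).1, rfl⟩
        · intro m hm
          refine Finset.mem_image.mpr ⟨rep m, Finset.mem_filter.mpr ⟨(hrep m hm).1, ?_⟩,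
            (hrep m hm).2⟩
          rw [(hrep m hm).2]
      have hinj : Set.InjOn C ↑REPS := by
        intro e he e' he' hce
        have h1 := (Finset.mem_filter.mp (Finset.mem_coe.mp he)).2
        have h2 := (Finset.mem_filter.mp (Finset.mem_coe.mp he')).2
        rw [← h1, ← h2, hce]
      rw [← himg, Finset.card_image_of_injOn hinj]
    have hREPSsub : REPS ⊆ MF := Finset.filter_subset _ _
    have hFS2 : FS.card + 2 * CM.card ≤ 2 * MF.card := by
      have himg : ∀ e ∈ FS.image Medge, e ∈ MF \ REPS := by
        intro e he
        obtain ⟨v, hv, rfl⟩ := Finset.mem_image.mp he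
        rw [Finset.mem_sdiff]
        refine ⟨(hMFmem _).mpr (hMedge v).1, ?_⟩
        intro hcon
        have := (Finset.mem_filter.mp hcon).2
        exact ((hFSmem v).mp hv) this
      have hfib : ∀ e ∈ FS.image Medge, (FS.filter (fun v => Medge v = e)).card ≤ 2 := by
        intro e he
        obtain ⟨v0, _, rfl⟩ := Finset.mem_image.mp he
        have hsub : FS.filter (fun v => Medge v = Medge v0) ⊆ {v0, p v0} := by
          intro w hw
          have hw2 := (Finset.mem_filter.mp hw).2
          have : w ∈ s(v0, p v0) := by rw [hp v0, ← hw2]; exact (hMedge w).2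
          rcases Sym2.mem_iff.mp this with h | h <;> simp [h]
        calc (FS.filter (fun v => Medge v = Medge v0)).card
            ≤ ({v0, p v0} : Finset V).card := Finset.card_le_card hsub
          _ ≤ 2 := Finset.card_insert_le _ _ |>.trans (by simp)
      have h1 : FS.card ≤ 2 * (FS.image Medge).card :=
        Finset.card_le_mul_card_image _ 2 hfib
      have h2 : (FS.image Medge).card ≤ (MF \ REPS).card :=
        Finset.card_le_card (fun e he => himg e he)
      have h3 : (MF \ REPS).card = MF.card - REPS.card := Finset.card_sdiff_of_subset hREPSsub
      have h4 : REPS.card ≤ MF.card := Finset.card_le_card hREPSsub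
      omega
    -- neighborhoods and degrees
    set NB : V → Finset V := fun v => (G.neighborSet v).toFinite.toFinset with hNBdef
    have hNBmem : ∀ v w, w ∈ NB v ↔ G.Adj v w := by
      intro v w
      simp [hNBdef, Set.Finite.mem_toFinset]
    have hdeg : ∀ v, D + 2 ≤ (NB v).card := by
      intro v
      have h := hδ v
      rwa [Set.ncard_eq_toFinset_card (G.neighborSet v)] at h
    -- pure colors, color classes, exits
    set PF : Finset ℕ := CE \ CM with hPFdef
    set VF : ℕ → Finset V := fun a => Finset.univ.filter (fun v => a ∈ PAL v) with hVFdef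
    have hVFmem : ∀ a v, v ∈ VF a ↔ a ∈ PAL v := by
      intro a v; simp [hVFdef]
    set Na : V → ℕ → Finset V := fun u a => (NB u).filter (fun w => C s(u, w) = a) with hNadef
    set Ex : V → Finset V := fun u => (NB u).filter (fun w => C s(u, w) = μ u ∧ w ≠ p u)
      with hExdef
    have noTri : ∀ x y z : V, G.Adj x y → G.Adj x z → G.Adj y z → False := by
      intro x y z h1 h2 h3
      exact hfree {x, y, z} (SimpleGraph.is3Clique_triple_iff.mpr ⟨h1, h2, h3⟩)
    have hPFCE : ∀ a ∈ PF, a ∈ CE := fun a ha => (Finset.mem_sdiff.mp ha).1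
    have hPFCM : ∀ a ∈ PF, a ∉ CM := fun a ha => (Finset.mem_sdiff.mp ha).2
    have hPFμ : ∀ a ∈ PF, ∀ v, a ≠ μ v := by
      intro a ha v h
      exact hPFCM a ha (h ▸ hμCM v)
    -- the color dichotomy at a vertex seeing a pure color
    have hdichot : ∀ a ∈ PF, ∀ v, a ∈ PAL v → ∀ e ∈ G.edgeSet, v ∈ e →
        C e = a ∨ C e = μ v := by
      intro a ha v hav e he hve
      have h1 : C e ∈ PAL v := hPALmem v e he hve
      by_cases h : C e = a
      · exact Or.inl h
      · exact Or.inr (two_mem_aux (hPALcard v) h1 (hμPAL v) hav h (hPFμ a ha v).symm)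
    -- choice of a representative edge for each pure color
    have hexCE : ∀ a ∈ CE, ∃ x : V, ∃ y : V, G.Adj x y ∧ C s(x, y) = a := by
      intro a ha
      obtain ⟨e, he, hce⟩ := Finset.mem_image.mp ha
      rw [hEFmem] at he
      induction e using Sym2.ind with
      | _ x y => exact ⟨x, y, G.mem_edgeSet.mp he, hce⟩
    obtain ⟨u1, u2, hu⟩ : ∃ (u1 u2 : ℕ → V), ∀ a ∈ CE,
        G.Adj (u1 a) (u2 a) ∧ C s(u1 a, u2 a) = a := by
      choose f g hfg using hexCE
      refine ⟨fun a => if h : a ∈ CE then f a h else default,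
        fun a => if h : a ∈ CE then g a h else default, ?_⟩
      intro a ha
      simp only [dif_pos ha]
      exact hfg a ha
    have hu1VF : ∀ a ∈ PF, u1 a ∈ VF a := by
      intro a ha
      have h := hu a (hPFCE a ha)
      have h2 := hPALmem (u1 a) s(u1 a, u2 a) (G.mem_edgeSet.mpr h.1) (Sym2.mem_mk_left _ _)
      rw [h.2] at h2
      exact (hVFmem a _).mpr h2
    have hu2VF : ∀ a ∈ PF, u2 a ∈ VF a := by
      intro a ha
      have h := hu a (hPFCE a ha)
      have h2 := hPALmem (u2 a) s(u1 a, u2 a) (G.mem_edgeSet.mpr h.1) (Sym2.mem_mk_right _ _)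
      rw [h.2] at h2
      exact (hVFmem a _).mpr h2
    have hVFdisj : ∀ a ∈ PF, ∀ b ∈ PF, a ≠ b → Disjoint (VF a) (VF b) := by
      intro a ha b hb hab
      rw [Finset.disjoint_left]
      intro v hva hvb
      exact hab (two_mem_aux (hPALcard v) ((hVFmem a v).mp hva) ((hVFmem b v).mp hvb)
        (hμPAL v) (hPFμ a ha v) (hPFμ b hb v))
    -- degree split at a vertex of a pure class
    have hdegsplit : ∀ a ∈ PF, ∀ u, a ∈ PAL u → D + 2 ≤ (Na u a).card + (Ex u).card + 1 := by
      intro a ha u hau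
      have hsub : NB u ⊆ Na u a ∪ Ex u ∪ {p u} := by
        intro w hw
        have hadj : G.Adj u w := (hNBmem u w).mp hw
        have he : s(u, w) ∈ G.edgeSet := G.mem_edgeSet.mpr hadj
        rcases hdichot a ha u hau s(u, w) he (Sym2.mem_mk_left u w) with h | h
        · exact Finset.mem_union_left _ (Finset.mem_union_left _
            (Finset.mem_filter.mpr ⟨hw, h⟩))
        · by_cases hpu : w = p u
          · exact Finset.mem_union_right _ (by simp [hpu])
          · exact Finset.mem_union_left _ (Finset.mem_union_right _
              (Finset.mem_filter.mpr ⟨hw, h, hpu⟩))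
      calc D + 2 ≤ (NB u).card := hdeg u
        _ ≤ (Na u a ∪ Ex u ∪ {p u}).card := Finset.card_le_card hsub
        _ ≤ (Na u a ∪ Ex u).card + ({p u} : Finset V).card := Finset.card_union_le _ _
        _ ≤ (Na u a).card + (Ex u).card + 1 := by
            have := Finset.card_union_le (Na u a) (Ex u)
            simp only [Finset.card_singleton]
            omega
    have hNasub : ∀ a ∈ PF, ∀ u, Na u a ⊆ VF a := by
      intro a ha u w hw
      obtain ⟨hwNB, hcw⟩ := Finset.mem_filter.mp hw
      have hadj : G.Adj u w := (hNBmem u w).mp hwNB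
      exact (hVFmem a w).mpr (hcw ▸ hPALmem w s(u, w) (G.mem_edgeSet.mpr hadj)
        (Sym2.mem_mk_right u w))
    have hdd : ∀ a ∈ PF, (Na (u1 a) a).card + (Na (u2 a) a).card ≤ (VF a).card := by
      intro a ha
      have hdisj : Disjoint (Na (u1 a) a) (Na (u2 a) a) := by
        rw [Finset.disjoint_left]
        intro w h1 h2
        have hadj1 : G.Adj (u1 a) w := (hNBmem _ _).mp (Finset.mem_filter.mp h1).1
        have hadj2 : G.Adj (u2 a) w := (hNBmem _ _).mp (Finset.mem_filter.mp h2).1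
        exact noTri _ _ _ (hu a (hPFCE a ha)).1 hadj1 hadj2
      rw [← Finset.card_union_of_disjoint hdisj]
      exact Finset.card_le_card (Finset.union_subset (hNasub a ha _) (hNasub a ha _))
    have hd1 : ∀ a ∈ PF, ∀ u, u ∈ VF a → (Na u a).card + 1 ≤ (VF a).card := by
      intro a ha u huVF
      have hnotmem : u ∉ Na u a := by
        intro hcon
        exact G.irrefl ((hNBmem u u).mp (Finset.mem_filter.mp hcon).1)
      have : insert u (Na u a) ⊆ VF a :=
        Finset.insert_subset huVF (hNasub a ha u)
      calc (Na u a).card + 1 = (insert u (Na u a)).card :=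
            (Finset.card_insert_of_notMem hnotmem).symm
        _ ≤ (VF a).card := Finset.card_le_card this
    have hs2 : ∀ a ∈ PF, 2 ≤ (VF a).card := by
      intro a ha
      have hne : u1 a ≠ u2 a := G.ne_of_adj (hu a (hPFCE a ha)).1
      have hsub : ({u1 a, u2 a} : Finset V) ⊆ VF a := by
        intro w hw
        simp only [Finset.mem_insert, Finset.mem_singleton] at hw
        rcases hw with rfl | rfl
        · exact hu1VF a ha
        · exact hu2VF a ha
      calc 2 = ({u1 a, u2 a} : Finset V).card := by
            rw [Finset.card_insert_of_notMem (by simp [hne]), Finset.card_singleton]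
        _ ≤ (VF a).card := Finset.card_le_card hsub
    -- token cost per class
    set uu : ℕ × Bool → V := fun q => if q.2 then u1 q.1 else u2 q.1 with huudef
    set tc : ℕ × Bool → ℕ := fun q => if Free (uu q) then D else (Ex (uu q)).card with htcdef
    have hclaim : ∀ a ∈ PF,
        2 * D + 2 ≤ (VF a).card + (tc (a, true) + tc (a, false)) := by
      intro a ha
      have h1 : uu (a, true) = u1 a := by simp [huudef]
      have h2 : uu (a, false) = u2 a := by simp [huudef]
      have hPAL1 : a ∈ PAL (u1 a) := (hVFmem a _).mp (hu1VF a ha)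
      have hPAL2 : a ∈ PAL (u2 a) := (hVFmem a _).mp (hu2VF a ha)
      have hds1 := hdegsplit a ha (u1 a) hPAL1
      have hds2 := hdegsplit a ha (u2 a) hPAL2
      have hdd' := hdd a ha
      have hd11 := hd1 a ha (u1 a) (hu1VF a ha)
      have hd12 := hd1 a ha (u2 a) (hu2VF a ha)
      have hs2' := hs2 a ha
      simp only [htcdef, h1, h2]
      by_cases hf1 : Free (u1 a) <;> by_cases hf2 : Free (u2 a)
      · rw [if_pos hf1, if_pos hf2]; omega
      · rw [if_pos hf1, if_neg hf2]; omega
      · rw [if_neg hf1, if_pos hf2]; omega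
      · rw [if_neg hf1, if_neg hf2]; omega
    -- index set of (class, chosen endpoint)
    set T : Finset (ℕ × Bool) := PF ×ˢ Finset.univ with hTdef
    have hTmem : ∀ q : ℕ × Bool, q ∈ T ↔ q.1 ∈ PF := by
      intro q; simp [hTdef, Finset.mem_product]
    have huuVF : ∀ q ∈ T, uu q ∈ VF q.1 := by
      intro q hq
      have ha := (hTmem q).mp hq
      rcases q with ⟨a, i⟩
      cases i
      · simpa [huudef] using hu2VF a ha
      · simpa [huudef] using hu1VF a ha
    have huuInj : ∀ q ∈ T, ∀ q' ∈ T, uu q = uu q' → q = q' := by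
      rintro ⟨a, i⟩ hq ⟨b, j⟩ hq' heq
      have ha := (hTmem _).mp hq
      have hb := (hTmem _).mp hq'
      have hab : a = b := by
        by_contra hne
        have h1 := huuVF _ hq
        have h2 := huuVF _ hq'
        rw [heq] at h1
        exact Finset.disjoint_left.mp (hVFdisj a ha b hb hne) h1 h2
      subst hab
      have hne12 : u1 a ≠ u2 a := G.ne_of_adj (hu a (hPFCE a ha)).1
      cases i <;> cases j <;> simp only [huudef] at heq
      · rfl
      · exact absurd heq.symm hne12
      · exact absurd heq hne12
      · rfl
    set A : Finset V := PF.biUnion VF with hAdef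
    have hAcard : ∑ a ∈ PF, (VF a).card = A.card := (Finset.card_biUnion hVFdisj).symm
    have hsumT : ∑ q ∈ T, tc q = ∑ a ∈ PF, (tc (a, true) + tc (a, false)) := by
      rw [hTdef, Finset.sum_product]
      exact Finset.sum_congr rfl fun a _ => Fintype.sum_bool _
    have hmain1 : (2 * D + 2) * PF.card ≤ A.card + ∑ q ∈ T, tc q := by
      have h1 : ∑ _a ∈ PF, (2 * D + 2) ≤
          ∑ a ∈ PF, ((VF a).card + (tc (a, true) + tc (a, false))) :=
        Finset.sum_le_sum hclaim
      rw [Finset.sum_const, smul_eq_mul, mul_comm, Finset.sum_add_distrib, hAcard] at h1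
      rw [hsumT]
      exact h1
    -- split into free and non-free chosen endpoints
    set Tf : Finset (ℕ × Bool) := T.filter (fun q => Free (uu q)) with hTfdef
    set Tn : Finset (ℕ × Bool) := T.filter (fun q => ¬ Free (uu q)) with hTndef
    have hsplit : ∑ q ∈ T, tc q = ∑ q ∈ Tf, tc q + ∑ q ∈ Tn, tc q :=
      (Finset.sum_filter_add_sum_filter_not T _ tc).symm
    have hTfsum : ∑ q ∈ Tf, tc q = D * Tf.card := by
      have h1 : ∀ q ∈ Tf, tc q = D := by
        intro q hq
        simp only [htcdef]
        exact if_pos (Finset.mem_filter.mp hq).2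
      rw [Finset.sum_congr rfl h1, Finset.sum_const, smul_eq_mul, mul_comm]
    have hTfcard : Tf.card ≤ FS.card := by
      apply Finset.card_le_card_of_injOn uu
      · intro q hq
        exact (hFSmem _).mpr (Finset.mem_filter.mp hq).2
      · intro q hq q' hq' heq
        exact huuInj q (Finset.filter_subset _ _ (Finset.mem_coe.mp hq)) q'
          (Finset.filter_subset _ _ (Finset.mem_coe.mp hq')) heq
    have hTnsum : ∑ q ∈ Tn, tc q = ∑ q ∈ Tn, (Ex (uu q)).card := by
      apply Finset.sum_congr rfl
      intro q hq
      simp only [htcdef]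
      exact if_neg (Finset.mem_filter.mp hq).2
    have hswap : ∑ q ∈ Tn, (Ex (uu q)).card =
        ∑ w : V, (Tn.filter (fun q => w ∈ Ex (uu q))).card := by
      have h1 : ∀ q, (Ex (uu q)).card = ∑ w : V, if w ∈ Ex (uu q) then 1 else 0 := by
        intro q
        rw [← Finset.card_filter, Finset.filter_univ_mem]
      rw [Finset.sum_congr rfl (fun q _ => h1 q), Finset.sum_comm]
      exact Finset.sum_congr rfl (fun w _ => (Finset.card_filter _ _).symm)
    -- the receiver bound
    have hW : ∀ w : V, (Tn.filter (fun q => w ∈ Ex (uu q))).card ≤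
        (if w ∉ A then 1 else 0) + (if Free w then 1 else 0) := by
      intro w
      set Sw : Finset (ℕ × Bool) := Tn.filter (fun q => w ∈ Ex (uu q)) with hSwdef
      have hSwT : ∀ q ∈ Sw, q ∈ T :=
        fun q hq => Finset.filter_subset _ _ (Finset.filter_subset _ _ hq)
      have hfacts : ∀ q ∈ Sw, q.1 ∈ PF ∧ uu q ∈ VF q.1 ∧ ¬ Free (uu q) ∧ G.Adj (uu q) w ∧
          C s(uu q, w) = μ (uu q) ∧ w ≠ p (uu q) := by
        intro q hq
        obtain ⟨hqTn, hqEx⟩ := Finset.mem_filter.mp hq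
        obtain ⟨hqT, hqF⟩ := Finset.mem_filter.mp hqTn
        simp only [hExdef] at hqEx
        obtain ⟨hwNB, hcol, hwp⟩ := Finset.mem_filter.mp hqEx
        exact ⟨(hTmem q).mp hqT, huuVF q hqT, hqF, (hNBmem _ _).mp hwNB, hcol, hwp⟩
      have hμpal : ∀ q ∈ Sw, μ (uu q) ∈ PAL w := by
        intro q hq
        obtain ⟨_, _, _, hadj, hcol, _⟩ := hfacts q hq
        have h2 := hPALmem w s(uu q, w) (G.mem_edgeSet.mpr hadj) (Sym2.mem_mk_right _ _)
        rwa [hcol] at h2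
      have hrepq : ∀ q ∈ Sw, rep (μ (uu q)) = Medge (uu q) := by
        intro q hq
        exact hnonfree _ (hfacts q hq).2.2.1
      have hsame : ∀ q ∈ Sw, ∀ q' ∈ Sw, μ (uu q) = μ (uu q') → q = q' := by
        intro q hq q' hq' hμeq
        have hMe : Medge (uu q) = Medge (uu q') := by
          rw [← hrepq q hq, ← hrepq q' hq', hμeq]
        have hm : uu q' ∈ s(uu q, p (uu q)) := by
          rw [hp (uu q), hMe, ← hp (uu q')]
          exact Sym2.mem_mk_left _ _
        rcases Sym2.mem_iff.mp hm with h | h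
        · exact (huuInj q' (hSwT q' hq') q (hSwT q hq) h).symm
        · exfalso
          obtain ⟨_, _, _, hadj, _, _⟩ := hfacts q hq
          obtain ⟨_, _, _, hadj', _, _⟩ := hfacts q' hq'
          refine noTri (uu q) (uu q') w ?_ hadj hadj'
          rw [h]
          exact hpadj (uu q)
      have hnfw : ¬ Free w → ∀ q ∈ Sw, μ (uu q) ≠ μ w := by
        intro hfw q hq heq
        obtain ⟨_, _, _, hadj, _, hwp⟩ := hfacts q hq
        have h2 : rep (μ w) = Medge w := hnonfree w hfw
        have hMe : Medge (uu q) = Medge w := by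
          rw [← hrepq q hq, heq, h2]
        have hw2 := (hMedge w).2
        rw [← hMe, ← hp (uu q)] at hw2
        rcases Sym2.mem_iff.mp hw2 with h | h
        · rw [h] at hadj
          exact G.irrefl hadj
        · exact hwp h
      have hwAeq : ∀ b ∈ PF, w ∈ VF b → ∀ q ∈ Sw, μ (uu q) = μ w := by
        intro b hb hwb q hq
        exact two_mem_aux (hPALcard w) (hμpal q hq) (hμPAL w) ((hVFmem b w).mp hwb)
          (fun h => hPFCM b hb (h ▸ hμCM (uu q))) (hPFμ b hb w).symm
      by_cases hA1 : w ∈ A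
      · obtain ⟨b, hb, hwb⟩ := Finset.mem_biUnion.mp hA1
        rw [if_neg (not_not.mpr hA1)]
        by_cases hF1 : Free w
        · rw [if_pos hF1]
          simp only [zero_add]
          apply Finset.card_le_one.mpr
          intro q hq q' hq'
          exact hsame q hq q' hq'
            (((hwAeq b hb hwb q hq).trans (hwAeq b hb hwb q' hq').symm))
        · rw [if_neg hF1]
          have hempty : Sw = ∅ := by
            rw [Finset.eq_empty_iff_forall_notMem]
            intro q hq
            exact hnfw hF1 q hq (hwAeq b hb hwb q hq)
          rw [hempty]
          simp
      · rw [if_pos hA1]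
        by_cases hF1 : Free w
        · rw [if_pos hF1]
          have hle : Sw.card ≤ (PAL w).card := by
            apply Finset.card_le_card_of_injOn (fun q => μ (uu q))
            · intro q hq
              exact hμpal q (Finset.mem_coe.mp hq)
            · intro q hq q' hq' heq
              exact hsame q (Finset.mem_coe.mp hq) q' (Finset.mem_coe.mp hq') heq
          have := hPALcard w
          omega
        · rw [if_neg hF1]
          simp only [add_zero]
          apply Finset.card_le_one.mpr
          intro q hq q' hq'
          apply hsame q hq q' hq'
          exact two_mem_aux (hPALcard w) (hμpal q hq) (hμpal q' hq') (hμPAL w)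
            (hnfw hF1 q hq) (hnfw hF1 q' hq')
    -- summing the receiver bound
    have hsumW : ∑ w : V, ((if w ∉ A then 1 else 0) + (if Free w then 1 else 0))
        = (Finset.univ.filter (fun w => w ∉ A)).card + FS.card := by
      rw [Finset.sum_add_distrib]
      congr 1
      · rw [Finset.card_filter]
      · rw [hFSdef, Finset.card_filter]
    have hAuniv : A.card + (Finset.univ.filter (fun w => w ∉ A)).card = Fintype.card V := by
      have h1 := Finset.card_filter_add_card_filter_not
        (s := (Finset.univ : Finset V)) (p := fun w => w ∈ A)
      rw [Finset.filter_univ_mem, Finset.card_univ] at h1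
      exact h1
    have hTnsum2 : ∑ q ∈ Tn, tc q ≤
        (Finset.univ.filter (fun w => w ∉ A)).card + FS.card := by
      calc ∑ q ∈ Tn, tc q = ∑ q ∈ Tn, (Ex (uu q)).card := hTnsum
        _ = ∑ w : V, (Tn.filter (fun q => w ∈ Ex (uu q))).card := hswap
        _ ≤ ∑ w : V, ((if w ∉ A then 1 else 0) + (if Free w then 1 else 0)) :=
            Finset.sum_le_sum (fun w _ => hW w)
        _ = _ := hsumW
    -- perfect matching: |V| = 2|MF|
    have hnM : Fintype.card V = 2 * MF.card := by
      have hmap : ∀ v : V, Medge v ∈ MF := fun v => (hMFmem _).mpr (hMedge v).1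
      have h1 : (Finset.univ : Finset V).card =
          ∑ e ∈ MF, (Finset.univ.filter (fun v => Medge v = e)).card :=
        Finset.card_eq_sum_card_fiberwise (fun v _ => hmap v)
      have h2 : ∀ e, e ∈ MF → (Finset.univ.filter (fun v => Medge v = e)).card = 2 := by
        intro e
        induction e using Sym2.ind with
        | _ x y =>
          intro he
          rw [hMFmem] at he
          have hadj : G.Adj x y := G.mem_edgeSet.mp (hM.1 he)
          have hxy : x ≠ y := G.ne_of_adj hadj
          have hex : Medge x = s(x, y) := (hMuniq x s(x, y) he (Sym2.mem_mk_left x y)).symm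
          have hey : Medge y = s(x, y) := (hMuniq y s(x, y) he (Sym2.mem_mk_right x y)).symm
          have hset : Finset.univ.filter (fun v => Medge v = s(x, y)) = {x, y} := by
            ext v
            simp only [Finset.mem_filter, Finset.mem_univ, true_and, Finset.mem_insert,
              Finset.mem_singleton]
            constructor
            · intro hv
              have hvm : v ∈ s(x, y) := by rw [← hv]; exact (hMedge v).2
              exact Sym2.mem_iff.mp hvm
            · intro hv
              rcases hv with rfl | rfl
              · exact hex
              · exact hey
          rw [hset, Finset.card_insert_of_notMem (by simp [hxy]), Finset.card_singleton]
      rw [← Finset.card_univ, h1, Finset.sum_congr rfl h2, Finset.sum_const, smul_eq_mul,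
        mul_comm]
    -- the master inequality for pure colors
    have hchain : (2 * D + 2) * PF.card ≤ 2 * MF.card + D * FS.card + FS.card := by
      have h1 : D * Tf.card ≤ D * FS.card := Nat.mul_le_mul_left D hTfcard
      have h2 : A.card ≤ A.card := le_rfl
      have h3 := hmain1
      rw [hsplit, hTfsum] at h3
      have h4 : (2 * D + 2) * PF.card ≤
          A.card + D * FS.card + ((Finset.univ.filter (fun w => w ∉ A)).card + FS.card) := by
        linarith [hTnsum2]
      linarith [hAuniv, hnM, h4]
    -- conclusion
    have hCEle : CE.card ≤ CM.card + PF.card := by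
      have hsub : CE ⊆ CM ∪ PF := by
        intro c hc
        by_cases h : c ∈ CM
        · exact Finset.mem_union_left _ h
        · exact Finset.mem_union_right _ (Finset.mem_sdiff.mpr ⟨hc, h⟩)
      exact (Finset.card_le_card hsub).trans (Finset.card_union_le _ _)
    have hCMle : CM.card ≤ MF.card := Finset.card_image_le
    obtain ⟨x, hx⟩ : ∃ x, 2 * MF.card = FS.card + 2 * CM.card + x :=
      ⟨2 * MF.card - (FS.card + 2 * CM.card), by omega⟩
    have hg1 : (2 * D + 2) * CE.card ≤ (2 * D + 2) * CM.card + (2 * D + 2) * PF.card := by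
      have := Nat.mul_le_mul_left (2 * D + 2) hCEle
      rw [Nat.mul_add] at this
      exact this
    have hg2 : (2 * D + 2) * CE.card ≤
        (2 * D + 2) * CM.card + (2 * MF.card + D * FS.card + FS.card) :=
      hg1.trans (Nat.add_le_add_left hchain _)
    calc 2 * (D + 1) * CE.card = (2 * D + 2) * CE.card := by ring
      _ ≤ (2 * D + 2) * CM.card + (2 * MF.card + D * FS.card + FS.card) := hg2
      _ ≤ 2 * (D + 2) * MF.card := by
          have hform : (D + 2) * (2 * MF.card) =
              (2 * D + 2) * CM.card + (2 * MF.card + D * FS.card + FS.card) + (D + 1) * x := by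
            rw [hx]; ring
          calc (2 * D + 2) * CM.card + (2 * MF.card + D * FS.card + FS.card)
              ≤ (D + 2) * (2 * MF.card) := by rw [hform]; exact Nat.le_add_right _ _
            _ = 2 * (D + 2) * MF.card := by ring


/-- For a triangle-free graph with minimum degree `δ ≥ 3` and a perfect matching `M`,
`OPT(G) ≤ (1 + 1/(δ − 1))·ALG(G, M)`. -/
theorem opt_le_alg_perfectMatching_triangleFree {V : Type*} [Fintype V] (G : SimpleGraph V)
    (hfree : G.CliqueFree 3) (δ : ℕ)
    (hδ3 : 3 ≤ δ) (hδ : ∀ v : V, δ ≤ (G.neighborSet v).ncard)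
    (M : Set (Sym2 V)) (hM : IsMatchingSet G M) (hMperf : ∀ v : V, ∃ e ∈ M, v ∈ e) :
    (OPT G : ℝ) ≤ (1 + 1 / ((δ : ℝ) - 1)) * (ALG G M : ℝ) := by
  classical
  have hOPTmem : OPT G ∈ {n : ℕ | ∃ C : Sym2 V → ℕ, IsEdge2Coloring G C ∧ numColors G C = n} := by
    apply Nat.sSup_mem
    · refine ⟨numColors G (fun _ => 0), fun _ => 0, ?_, rfl⟩
      intro v
      have hsub : (fun _ : Sym2 V => 0) '' G.incidenceSet v ⊆ {0} := by
        rintro z ⟨e, _, rfl⟩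
        rfl
      calc ((fun _ : Sym2 V => 0) '' G.incidenceSet v).ncard ≤ ({0} : Set ℕ).ncard :=
            Set.ncard_le_ncard hsub (Set.finite_singleton 0)
        _ ≤ 2 := by simp
    · refine ⟨2 * δ * M.ncard, ?_⟩
      rintro k ⟨C, hC, rfl⟩
      have h := key_bound G hfree δ hδ3 hδ M hM hMperf C hC
      have h1 : 1 ≤ 2 * (δ - 1) := by omega
      calc numColors G C = 1 * numColors G C := (one_mul _).symm
        _ ≤ 2 * (δ - 1) * numColors G C := Nat.mul_le_mul_right _ h1
        _ ≤ 2 * δ * M.ncard := h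
  obtain ⟨C, hC, hCk⟩ := hOPTmem
  have hkey := key_bound G hfree δ hδ3 hδ M hM hMperf C hC
  rw [hCk] at hkey
  have hδR : (0 : ℝ) < (δ : ℝ) - 1 := by
    have h3 : (3 : ℝ) ≤ (δ : ℝ) := by exact_mod_cast hδ3
    linarith
  have hfrac : (1 : ℝ) + 1 / ((δ : ℝ) - 1) = (δ : ℝ) / ((δ : ℝ) - 1) := by
    field_simp
    ring
  rw [hfrac, div_mul_eq_mul_div, le_div_iff₀ hδR]
  have hALG : (M.ncard : ℝ) ≤ (ALG G M : ℝ) := by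
    have h4 : M.ncard ≤ ALG G M := Nat.le_add_right _ _
    exact_mod_cast h4
  have hkeyR : 2 * ((δ : ℝ) - 1) * (OPT G : ℝ) ≤ 2 * (δ : ℝ) * (M.ncard : ℝ) := by
    have h2 : ((2 * (δ - 1) * OPT G : ℕ) : ℝ) ≤ ((2 * δ * M.ncard : ℕ) : ℝ) := by
      exact_mod_cast hkey
    push_cast [Nat.cast_sub (show 1 ≤ δ by omega)] at h2
    convert h2 using 2
  have hmul : (δ : ℝ) * (M.ncard : ℝ) ≤ (δ : ℝ) * (ALG G M : ℝ) :=
    mul_le_mul_of_nonneg_left hALG (by positivity)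
  nlinarith [hkeyR, hmul]
end

section
/- Let h > 0 be a real number and let G be a finite simple connected graph on n vertices whose minimum degree δ satisfies δ ≥ 3 and δ ≥ h·√n + 1. Let M be a maximum matching of G. Then OPT(G) ≤ (1 + 6/h²)·ALG(G, M). -/
open SimpleGraph

lemma endpts_card_le {V : Type*} [Fintype V] [DecidableEq V] (e : Sym2 V) :
    (Finset.univ.filter (fun v => v ∈ e)).card ≤ 2 := by
  classical
  induction e using Sym2.inductionOn with
  | hf a b =>
    have hsub : Finset.univ.filter (fun v => v ∈ s(a,b)) ⊆ {a, b} := by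
      intro v hv
      simp only [Finset.mem_filter, Sym2.mem_iff] at hv
      simp [hv.2]
    exact (Finset.card_le_card hsub).trans ((Finset.card_insert_le _ _).trans (by simp))

lemma matching_lower {V : Type*} [Fintype V] (G : SimpleGraph V) (δ : ℕ)
    (hδ : ∀ v : V, δ ≤ (G.neighborSet v).ncard)
    (M : Set (Sym2 V)) (hM : IsMatchingSet G M)
    (hmax : ∀ M' : Set (Sym2 V), IsMatchingSet G M' → M'.ncard ≤ M.ncard) :
    δ ≤ M.ncard ∨ Fintype.card V ≤ 2 * M.ncard + 1 := by
  classical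
  have hMfin : M.Finite := Set.toFinite M
  set MF : Finset (Sym2 V) := hMfin.toFinset with hMF
  have hMcard : M.ncard = MF.card := Set.ncard_eq_toFinset_card _ _
  by_cases hUc : (Finset.univ.filter (fun v => ¬ ∃ e ∈ M, v ∈ e)).card ≤ 1
  · right
    have hsplit := Finset.card_filter_add_card_filter_not (s := (Finset.univ : Finset V))
      (p := fun v => ∃ e ∈ M, v ∈ e)
    have hsub : Finset.univ.filter (fun v => ∃ e ∈ M, v ∈ e) ⊆
        MF.biUnion (fun e => Finset.univ.filter (fun v => v ∈ e)) := by
      intro v hv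
      simp only [Finset.mem_filter, Finset.mem_biUnion, Finset.mem_univ, true_and] at *
      obtain ⟨e, heM, hve⟩ := hv
      exact ⟨e, hMfin.mem_toFinset.mpr heM, hve⟩
    have h2 : (Finset.univ.filter (fun v => ∃ e ∈ M, v ∈ e)).card ≤ 2 * MF.card := by
      calc _ ≤ (MF.biUnion (fun e => Finset.univ.filter (fun v => v ∈ e))).card :=
            Finset.card_le_card hsub
        _ ≤ ∑ e ∈ MF, (Finset.univ.filter (fun v => v ∈ e)).card := Finset.card_biUnion_le
        _ ≤ ∑ _e ∈ MF, 2 := Finset.sum_le_sum (fun e _ => endpts_card_le e)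
        _ = 2 * MF.card := by rw [Finset.sum_const, smul_eq_mul, mul_comm]
    have huniv : (Finset.univ : Finset V).card = Fintype.card V := Finset.card_univ
    omega
  · left
    push_neg at hUc
    obtain ⟨u, hu, w, hw, huw⟩ := Finset.one_lt_card.mp hUc
    simp only [Finset.mem_filter, Finset.mem_univ, true_and, not_exists] at hu hw
    have humem : ∀ e ∈ M, u ∉ e := fun e he => hu e he
    have hwmem : ∀ e ∈ M, w ∉ e := fun e he => hw e he
    -- every neighbor of an unmatched vertex is matched
    have hnb : ∀ z : V, (∀ e ∈ M, z ∉ e) → ∀ x : V, G.Adj z x → ∃ e ∈ M, x ∈ e := by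
      intro z hz x hzx
      by_contra hx
      push_neg at hx
      have hne : s(z,x) ∉ M := fun hmem => hz _ hmem (Sym2.mem_mk_left z x)
      have hM' : IsMatchingSet G (insert s(z,x) M) := by
        refine ⟨fun p hp => ?_, fun p hp q hq hpq v hvp hvq => ?_⟩
        · rcases Set.mem_insert_iff.mp hp with h | h
          · rw [h]; exact hzx
          · exact hM.1 h
        · rcases Set.mem_insert_iff.mp hp with h1 | h1 <;>
            rcases Set.mem_insert_iff.mp hq with h2 | h2
          · exact hpq (h1.trans h2.symm)
          · rw [h1] at hvp
            rcases Sym2.mem_iff.mp hvp with h3 | h3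
            · exact hz q h2 (h3 ▸ hvq)
            · exact hx q h2 (h3 ▸ hvq)
          · rw [h2] at hvq
            rcases Sym2.mem_iff.mp hvq with h3 | h3
            · exact hz p h1 (h3 ▸ hvp)
            · exact hx p h1 (h3 ▸ hvp)
          · exact hM.2 p h1 q h2 hpq v hvp hvq
      have := hmax _ hM'
      rw [Set.ncard_insert_of_notMem hne hMfin] at this
      omega
    -- the matched-edge function
    have hfEex : ∀ x : V, ∃ g : Sym2 V, (∃ e ∈ M, x ∈ e) → g ∈ M ∧ x ∈ g := by
      intro x
      by_cases hx : ∃ e ∈ M, x ∈ e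
      · obtain ⟨e, he, hxe⟩ := hx
        exact ⟨e, fun _ => ⟨he, hxe⟩⟩
      · exact ⟨s(x,x), fun h => absurd h hx⟩
    choose fE hfE1 using hfEex
    have hfE2 : ∀ x : V, ∀ e ∈ M, x ∈ e → fE x = e := by
      intro x e heM hxe
      obtain ⟨hf1, hf2⟩ := hfE1 x ⟨e, heM, hxe⟩
      by_contra hne
      exact hM.2 _ hf1 _ heM hne x hf2 hxe
    set Nu : Finset V := (G.neighborSet u).toFinite.toFinset with hNudef
    set Nw : Finset V := (G.neighborSet w).toFinite.toFinset with hNwdef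
    have hNuM : ∀ x ∈ Nu, fE x ∈ MF := by
      intro x hx
      rw [hNudef, Set.Finite.mem_toFinset, mem_neighborSet] at hx
      exact hMfin.mem_toFinset.mpr (hfE1 x (hnb u humem x hx)).1
    have hNwM : ∀ x ∈ Nw, fE x ∈ MF := by
      intro x hx
      rw [hNwdef, Set.Finite.mem_toFinset, mem_neighborSet] at hx
      exact hMfin.mem_toFinset.mpr (hfE1 x (hnb w hwmem x hx)).1
    have hcu : Nu.card = ∑ e ∈ MF, (Nu.filter (fun x => fE x = e)).card :=
      Finset.card_eq_sum_card_fiberwise hNuM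
    have hcw : Nw.card = ∑ e ∈ MF, (Nw.filter (fun x => fE x = e)).card :=
      Finset.card_eq_sum_card_fiberwise hNwM
    have key : ∀ e ∈ MF, (Nu.filter (fun x => fE x = e)).card
        + (Nw.filter (fun x => fE x = e)).card ≤ 2 := by
      intro e heF
      have heM : e ∈ M := hMfin.mem_toFinset.mp heF
      have hAprop : ∀ x ∈ Nu.filter (fun x => fE x = e), G.Adj u x ∧ x ∈ e := by
        intro x hx
        rw [Finset.mem_filter, hNudef, Set.Finite.mem_toFinset, mem_neighborSet] at hx
        obtain ⟨hadj, hfe⟩ := hx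
        exact ⟨hadj, hfe ▸ (hfE1 x (hnb u humem x hadj)).2⟩
      have hBprop : ∀ x ∈ Nw.filter (fun x => fE x = e), G.Adj w x ∧ x ∈ e := by
        intro x hx
        rw [Finset.mem_filter, hNwdef, Set.Finite.mem_toFinset, mem_neighborSet] at hx
        obtain ⟨hadj, hfe⟩ := hx
        exact ⟨hadj, hfe ▸ (hfE1 x (hnb w hwmem x hadj)).2⟩
      by_cases hpair : ∃ x ∈ Nu.filter (fun x => fE x = e),
          ∃ y ∈ Nw.filter (fun x => fE x = e), x ≠ y
      · exfalso
        obtain ⟨x, hxA, y, hyB, hxy⟩ := hpair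
        obtain ⟨hux, hxe⟩ := hAprop x hxA
        obtain ⟨hwy, hye⟩ := hBprop y hyB
        clear hAprop hBprop hcu hcw hNuM hNwM
        have hue : u ∉ e := humem e heM
        have hwe : w ∉ e := hwmem e heM
        have huy : u ≠ y := fun h => hue (h ▸ hye)
        have hwx : w ≠ x := fun h => hwe (h ▸ hxe)
        have hux' : u ≠ x := G.ne_of_adj hux
        have hwy' : w ≠ y := G.ne_of_adj hwy
        have hg : ∀ g ∈ M \ {e}, u ∉ g ∧ w ∉ g ∧ x ∉ g ∧ y ∉ g := by
          rintro g ⟨hgM, hge⟩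
          have hge' : e ≠ g := fun h => hge (by simp [h.symm])
          exact ⟨humem g hgM, hwmem g hgM, hM.2 e heM g hgM hge' x hxe,
            hM.2 e heM g hgM hge' y hye⟩
        have hM' : IsMatchingSet G (insert s(u,x) (insert s(w,y) (M \ {e}))) := by
          refine ⟨fun p hp => ?_, fun p hp q hq hpq v hvp hvq => ?_⟩
          · rcases Set.mem_insert_iff.mp hp with h | h
            · rw [h]; exact hux
            rcases Set.mem_insert_iff.mp h with h' | h'
            · rw [h']; exact hwy
            · exact hM.1 h'.1
          · have hmemux : ∀ r : V, r ∈ s(u,x) → r = u ∨ r = x := fun r hr => Sym2.mem_iff.mp hr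
            have hmemwy : ∀ r : V, r ∈ s(w,y) → r = w ∨ r = y := fun r hr => Sym2.mem_iff.mp hr
            rcases Set.mem_insert_iff.mp hp with h1 | h1'
            · -- p = s(u,x)
              rw [h1] at hvp
              rcases Set.mem_insert_iff.mp hq with h2 | h2'
              · exact hpq (h1.trans h2.symm)
              rcases Set.mem_insert_iff.mp h2' with h2 | h2
              · rw [h2] at hvq
                rcases hmemux v hvp with h3 | h3 <;> rcases hmemwy v hvq with h4 | h4
                exacts [huw (h3.symm.trans h4), huy (h3.symm.trans h4),
                  hwx (h4.symm.trans h3), hxy (h3.symm.trans h4)]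
              · rcases hmemux v hvp with h3 | h3
                · exact (hg q h2).1 (h3 ▸ hvq)
                · exact (hg q h2).2.2.1 (h3 ▸ hvq)
            rcases Set.mem_insert_iff.mp h1' with h1 | h1
            · -- p = s(w,y)
              rw [h1] at hvp
              rcases Set.mem_insert_iff.mp hq with h2 | h2'
              · rw [h2] at hvq
                rcases hmemwy v hvp with h3 | h3 <;> rcases hmemux v hvq with h4 | h4
                exacts [huw (h4.symm.trans h3), hwx (h3.symm.trans h4),
                  huy (h4.symm.trans h3), hxy (h4.symm.trans h3)]
              rcases Set.mem_insert_iff.mp h2' with h2 | h2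
              · exact hpq (h1.trans h2.symm)
              · rcases hmemwy v hvp with h3 | h3
                · exact (hg q h2).2.1 (h3 ▸ hvq)
                · exact (hg q h2).2.2.2 (h3 ▸ hvq)
            · -- p ∈ M \ {e}
              rcases Set.mem_insert_iff.mp hq with h2 | h2'
              · rw [h2] at hvq
                rcases hmemux v hvq with h3 | h3
                · exact (hg p h1).1 (h3 ▸ hvp)
                · exact (hg p h1).2.2.1 (h3 ▸ hvp)
              rcases Set.mem_insert_iff.mp h2' with h2 | h2
              · rw [h2] at hvq
                rcases hmemwy v hvq with h3 | h3
                · exact (hg p h1).2.1 (h3 ▸ hvp)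
                · exact (hg p h1).2.2.2 (h3 ▸ hvp)
              · rcases eq_or_ne p q with h | h
                · exact hpq h
                · exact hM.2 p h1.1 q h2.1 h v hvp hvq
        have hfin1 : (M \ {e}).Finite := hMfin.diff
        have h1 : s(w,y) ∉ M \ {e} := fun hmem => hwmem _ hmem.1 (Sym2.mem_mk_left _ _)
        have h2 : s(u,x) ∉ insert s(w,y) (M \ {e}) := by
          intro hmem
          rcases Set.mem_insert_iff.mp hmem with heq | hmem'
          · rcases Sym2.eq_iff.mp heq with ⟨h, _⟩ | ⟨h, _⟩
            · exact huw h
            · exact huy h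
          · exact humem _ hmem'.1 (Sym2.mem_mk_left _ _)
        have hc1 : (M \ {e}).ncard = M.ncard - 1 := Set.ncard_diff_singleton_of_mem heM
        have hpos : 0 < M.ncard := (Set.ncard_pos hMfin).mpr ⟨e, heM⟩
        have := hmax _ hM'
        rw [Set.ncard_insert_of_notMem h2 (hfin1.insert _),
          Set.ncard_insert_of_notMem h1 hfin1, hc1] at this
        omega
      · push_neg at hpair
        have hAsub : Nu.filter (fun x => fE x = e) ⊆ Finset.univ.filter (fun v => v ∈ e) := by
          intro x hx
          simp only [Finset.mem_filter, Finset.mem_univ, true_and]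
          exact (hAprop x hx).2
        have hBsub : Nw.filter (fun x => fE x = e) ⊆ Finset.univ.filter (fun v => v ∈ e) := by
          intro x hx
          simp only [Finset.mem_filter, Finset.mem_univ, true_and]
          exact (hBprop x hx).2
        have hecard := endpts_card_le (V := V) e
        rcases (Nu.filter (fun x => fE x = e)).eq_empty_or_nonempty with hA | ⟨x0, hx0⟩
        · have hb2 := (Finset.card_le_card hBsub).trans hecard
          rw [hA, Finset.card_empty]
          omega
        · rcases (Nw.filter (fun x => fE x = e)).eq_empty_or_nonempty with hB | ⟨y0, hy0⟩
          · have ha2 := (Finset.card_le_card hAsub).trans hecard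
            rw [hB, Finset.card_empty]
            omega
          · have hA1 : (Nu.filter (fun x => fE x = e)).card ≤ 1 :=
              Finset.card_le_one.mpr (fun a ha b hb => by
                rw [hpair a ha y0 hy0, hpair b hb y0 hy0])
            have hB1 : (Nw.filter (fun x => fE x = e)).card ≤ 1 :=
              Finset.card_le_one.mpr (fun a ha b hb => by
                rw [← hpair x0 hx0 a ha, ← hpair x0 hx0 b hb])
            omega
    have hdu : δ ≤ Nu.card := by
      rw [hNudef, ← Set.ncard_eq_toFinset_card]
      exact hδ u
    have hdw : δ ≤ Nw.card := by
      rw [hNwdef, ← Set.ncard_eq_toFinset_card]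
      exact hδ w
    have hsum : Nu.card + Nw.card ≤ 2 * MF.card := by
      rw [hcu, hcw, ← Finset.sum_add_distrib]
      calc ∑ e ∈ MF, ((Nu.filter (fun x => fE x = e)).card
            + (Nw.filter (fun x => fE x = e)).card) ≤ ∑ _e ∈ MF, 2 := Finset.sum_le_sum key
        _ = 2 * MF.card := by rw [Finset.sum_const, smul_eq_mul, mul_comm]
    omega


lemma coloring_upper {V : Type*} [Fintype V] [Nonempty V] (G : SimpleGraph V) (δ : ℕ)
    (hδ3 : 3 ≤ δ) (hδ : ∀ v : V, δ ≤ (G.neighborSet v).ncard)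
    (M : Set (Sym2 V))
    (hmax : ∀ M' : Set (Sym2 V), IsMatchingSet G M' → M'.ncard ≤ M.ncard)
    (C : Sym2 V → ℕ) (hC : IsEdge2Coloring G C) :
    numColors G C * (δ + 2) + 4 * M.ncard ≤ M.ncard * (δ + 2) + 4 * Fintype.card V := by
  classical
  have hE : G.edgeSet.Finite := Set.toFinite _
  set EF : Finset (Sym2 V) := hE.toFinset with hEF
  set Kf : Finset ℕ := EF.image C with hKf
  have hk : numColors G C = Kf.card := by
    rw [numColors, ← Set.ncard_coe_finset, hKf, Finset.coe_image, hE.coe_toFinset]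
  -- support of a color
  set Vc : ℕ → Finset V := fun c => Finset.univ.filter (fun v => c ∈ C '' G.incidenceSet v)
    with hVcdef
  -- membership helper: if e is an edge containing v with color c then v ∈ Vc c
  have hVcmem : ∀ (c : ℕ) (v : V) (e : Sym2 V), e ∈ G.edgeSet → v ∈ e → C e = c → v ∈ Vc c := by
    intro c v e he hv hce
    rw [hVcdef]
    simp only [Finset.mem_filter, Finset.mem_univ, true_and]
    exact ⟨e, ⟨he, hv⟩, hce⟩
  -- every color has at least two vertices in its support
  have hVc2 : ∀ c ∈ Kf, 2 ≤ (Vc c).card := by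
    intro c hc
    rw [hKf, Finset.mem_image] at hc
    obtain ⟨e, heE, hce⟩ := hc
    rw [hEF, Set.Finite.mem_toFinset] at heE
    induction e using Sym2.inductionOn with
    | hf a b =>
      have hab : a ≠ b := fun h => (G.irrefl (h ▸ heE))
      have ha : a ∈ Vc c := hVcmem c a _ heE (Sym2.mem_mk_left _ _) hce
      have hb : b ∈ Vc c := hVcmem c b _ heE (Sym2.mem_mk_right _ _) hce
      have : ({a, b} : Finset V) ⊆ Vc c := by
        intro x hx
        rcases Finset.mem_insert.mp hx with h | h
        · exact h ▸ ha
        · exact (Finset.mem_singleton.mp h) ▸ hb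
      calc 2 = ({a, b} : Finset V).card := by rw [Finset.card_insert_of_notMem (by simpa), Finset.card_singleton]
        _ ≤ _ := Finset.card_le_card this
  -- total support is at most 2n
  have hsum : ∑ c ∈ Kf, (Vc c).card ≤ 2 * Fintype.card V := by
    have hswap : ∑ c ∈ Kf, (Vc c).card
        = ∑ v : V, (Kf.filter (fun c => c ∈ C '' G.incidenceSet v)).card := by
      simp only [hVcdef, Finset.card_filter]
      rw [Finset.sum_comm]
    rw [hswap]
    have hv2 : ∀ v : V, (Kf.filter (fun c => c ∈ C '' G.incidenceSet v)).card ≤ 2 := by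
      intro v
      have hPfin : (C '' G.incidenceSet v).Finite := Set.toFinite _
      have hsub : Kf.filter (fun c => c ∈ C '' G.incidenceSet v) ⊆ hPfin.toFinset := by
        intro c hc
        rw [Set.Finite.mem_toFinset]
        exact (Finset.mem_filter.mp hc).2
      calc (Kf.filter (fun c => c ∈ C '' G.incidenceSet v)).card ≤ hPfin.toFinset.card :=
            Finset.card_le_card hsub
        _ = (C '' G.incidenceSet v).ncard := (Set.ncard_eq_toFinset_card _ _).symm
        _ ≤ 2 := hC v
    calc ∑ v : V, (Kf.filter (fun c => c ∈ C '' G.incidenceSet v)).card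
        ≤ ∑ _v : V, 2 := Finset.sum_le_sum (fun v _ => hv2 v)
      _ = 2 * Fintype.card V := by rw [Finset.sum_const, smul_eq_mul, mul_comm, Finset.card_univ]
  -- small and big colors
  set Sm : Finset ℕ := Kf.filter (fun c => 2 * (Vc c).card ≤ δ + 1) with hSm
  set Bg : Finset ℕ := Kf.filter (fun c => ¬ (2 * (Vc c).card ≤ δ + 1)) with hBg
  have hsplit : Sm.card + Bg.card = Kf.card :=
    Finset.card_filter_add_card_filter_not _
  -- disjointness of supports of small colors
  have hdisj : ∀ c ∈ Sm, ∀ d ∈ Sm, c ≠ d → ∀ v : V, v ∈ Vc c → v ∉ Vc d := by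
    intro c hc d hd hcd v hvc hvd
    rw [hSm, Finset.mem_filter] at hc hd
    -- the palette of v
    have hcP : c ∈ C '' G.incidenceSet v := by
      have := hvc; rw [hVcdef] at this
      simpa using (Finset.mem_filter.mp this).2
    have hdP : d ∈ C '' G.incidenceSet v := by
      have := hvd; rw [hVcdef] at this
      simpa using (Finset.mem_filter.mp this).2
    have hPfin : (C '' G.incidenceSet v).Finite := Set.toFinite _
    have hpal : ∀ a ∈ C '' G.incidenceSet v, a = c ∨ a = d := by
      intro a ha
      by_contra hcon
      push_neg at hcon
      have h3 : ({a, c, d} : Finset ℕ) ⊆ hPfin.toFinset := by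
        intro x hx
        rw [Set.Finite.mem_toFinset]
        rcases Finset.mem_insert.mp hx with h | hx
        · exact h ▸ ha
        rcases Finset.mem_insert.mp hx with h | hx
        · exact h ▸ hcP
        · exact (Finset.mem_singleton.mp hx) ▸ hdP
      have hc3 : ({a, c, d} : Finset ℕ).card = 3 := by
        rw [Finset.card_insert_of_notMem (by simp [hcon.1, hcon.2]),
          Finset.card_insert_of_notMem (by simpa using hcd), Finset.card_singleton]
      have := Finset.card_le_card h3
      rw [hc3] at this
      have h2 := hC v
      rw [Set.ncard_eq_toFinset_card _ hPfin] at h2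
      omega
    -- neighbors of v split into the two supports
    set Nv : Finset V := (G.neighborSet v).toFinite.toFinset with hNv
    have hNsub : Nv ⊆ ((Vc c).erase v) ∪ ((Vc d).erase v) := by
      intro x hx
      rw [hNv, Set.Finite.mem_toFinset, mem_neighborSet] at hx
      have hedge : s(v,x) ∈ G.edgeSet := hx
      have hcol : C s(v,x) ∈ C '' G.incidenceSet v :=
        ⟨s(v,x), ⟨hedge, Sym2.mem_mk_left _ _⟩, rfl⟩
      have hxv : x ≠ v := fun h => G.irrefl (h ▸ hx)
      rcases hpal _ hcol with h | h
      · apply Finset.mem_union_left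
        exact Finset.mem_erase.mpr ⟨hxv, hVcmem c x _ hedge (Sym2.mem_mk_right _ _) h⟩
      · apply Finset.mem_union_right
        exact Finset.mem_erase.mpr ⟨hxv, hVcmem d x _ hedge (Sym2.mem_mk_right _ _) h⟩
    have hvcc : v ∈ Vc c := hvc
    have hvdd : v ∈ Vc d := hvd
    have hNcard : δ ≤ Nv.card := by
      rw [hNv, ← Set.ncard_eq_toFinset_card]
      exact hδ v
    have hce : ((Vc c).erase v).card = (Vc c).card - 1 := Finset.card_erase_of_mem hvcc
    have hde : ((Vc d).erase v).card = (Vc d).card - 1 := Finset.card_erase_of_mem hvdd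
    have hNle := (Finset.card_le_card hNsub).trans (Finset.card_union_le _ _)
    have hc2 : 2 ≤ (Vc c).card := hVc2 c hc.1
    have hd2 : 2 ≤ (Vc d).card := hVc2 d hd.1
    have hcs := hc.2
    have hds := hd.2
    omega
  -- small colors give a matching
  have hpickex : ∀ c : ℕ, ∃ e : Sym2 V, c ∈ Kf → e ∈ G.edgeSet ∧ C e = c := by
    intro c
    by_cases hc : c ∈ Kf
    · rw [hKf, Finset.mem_image] at hc
      obtain ⟨e, heE, hce⟩ := hc
      rw [hEF, Set.Finite.mem_toFinset] at heE
      exact ⟨e, fun _ => ⟨heE, hce⟩⟩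
    · inhabit V
      exact ⟨s(default, default), fun h => absurd h hc⟩
  choose pick hpick using hpickex
  have hSmKf : Sm ⊆ Kf := Finset.filter_subset _ _
  have hmatch : IsMatchingSet G ↑(Sm.image pick) := by
    constructor
    · intro e he
      rw [Finset.coe_image] at he
      obtain ⟨c, hc, rfl⟩ := he
      exact (hpick c (hSmKf hc)).1
    · intro e he f hf hef v hve hvf
      rw [Finset.coe_image] at he hf
      obtain ⟨c, hc, rfl⟩ := he
      obtain ⟨d, hd, rfl⟩ := hf
      have hcd : c ≠ d := fun h => hef (by rw [h])
      have h1 : v ∈ Vc c := hVcmem c v _ (hpick c (hSmKf hc)).1 hve (hpick c (hSmKf hc)).2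
      have h2 : v ∈ Vc d := hVcmem d v _ (hpick d (hSmKf hd)).1 hvf (hpick d (hSmKf hd)).2
      exact hdisj c hc d hd hcd v h1 h2
  have hsmall : Sm.card ≤ M.ncard := by
    have := hmax _ hmatch
    rw [Set.ncard_coe_finset] at this
    have hinj : Set.InjOn pick ↑Sm := by
      intro c hc d hd hpe
      have h1 := (hpick c (hSmKf hc)).2
      have h2 := (hpick d (hSmKf hd)).2
      rw [← h1, ← h2, hpe]
    rw [Finset.card_image_of_injOn hinj] at this
    exact this
  -- big colors have large support
  have hbig : (δ + 2) * Bg.card ≤ ∑ c ∈ Bg, 2 * (Vc c).card := by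
    have : ∀ c ∈ Bg, δ + 2 ≤ 2 * (Vc c).card := by
      intro c hc
      rw [hBg, Finset.mem_filter] at hc
      omega
    calc (δ + 2) * Bg.card = ∑ _c ∈ Bg, (δ + 2) := by
          rw [Finset.sum_const, smul_eq_mul, mul_comm]
      _ ≤ _ := Finset.sum_le_sum this
  have hsm4 : 4 * Sm.card ≤ ∑ c ∈ Sm, 2 * (Vc c).card := by
    have : ∀ c ∈ Sm, 4 ≤ 2 * (Vc c).card := by
      intro c hc
      have := hVc2 c (hSmKf hc)
      omega
    calc 4 * Sm.card = ∑ _c ∈ Sm, 4 := by rw [Finset.sum_const, smul_eq_mul, mul_comm]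
      _ ≤ _ := Finset.sum_le_sum this
  have htot : ∑ c ∈ Sm, 2 * (Vc c).card + ∑ c ∈ Bg, 2 * (Vc c).card ≤ 4 * Fintype.card V := by
    rw [hSm, hBg, Finset.sum_filter_add_sum_filter_not, ← Finset.mul_sum]
    omega
  -- final arithmetic
  rw [hk, ← hsplit]
  set s := Sm.card
  set b := Bg.card
  set m := M.ncard
  set n := Fintype.card V
  have h1 : 4 * s + (δ + 2) * b ≤ 4 * n := by omega
  nlinarith [Nat.mul_le_mul_right (δ + 2) hsmall]


lemma exists_opt {V : Type*} [Fintype V] (G : SimpleGraph V) :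
    ∃ C : Sym2 V → ℕ, IsEdge2Coloring G C ∧ numColors G C = OPT G := by
  classical
  have hbdd : BddAbove {n : ℕ | ∃ C : Sym2 V → ℕ, IsEdge2Coloring G C ∧ numColors G C = n} := by
    refine ⟨(Set.univ : Set (Sym2 V)).ncard, ?_⟩
    rintro k ⟨C, -, rfl⟩
    calc numColors G C ≤ G.edgeSet.ncard := Set.ncard_image_le (Set.toFinite _)
      _ ≤ _ := Set.ncard_le_ncard (Set.subset_univ _) (Set.toFinite _)
  have hco : IsEdge2Coloring G (fun _ => 0) := by
    intro v
    have hsub : (fun _ => 0) '' G.incidenceSet v ⊆ {0} := by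
      rintro x ⟨e, -, rfl⟩; rfl
    calc ((fun _ => 0) '' G.incidenceSet v).ncard ≤ ({0} : Set ℕ).ncard :=
          Set.ncard_le_ncard hsub (Set.finite_singleton _)
      _ ≤ 2 := by simp
  have hne : {n : ℕ | ∃ C : Sym2 V → ℕ, IsEdge2Coloring G C ∧ numColors G C = n}.Nonempty :=
    ⟨numColors G (fun _ => 0), ⟨fun _ => 0, hco, rfl⟩⟩
  exact Nat.sSup_mem hne hbdd


lemma final_arith (k m n d c h : ℝ)
    (Fr1 : k * (d + 2) + 4 * m ≤ m * (d + 2) + 4 * n)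
    (Fr2 : d ≤ m ∨ n ≤ 2 * m + 1)
    (Fr3 : d + 1 ≤ n)
    (Fr4 : (3 : ℝ) ≤ d)
    (Fr5 : (1 : ℝ) ≤ c)
    (hh : 0 < h)
    (F7 : h ^ 2 * n ≤ (d - 1) ^ 2)
    (hm0 : 0 ≤ m) (hk0 : 0 ≤ k) :
    k ≤ (1 + 6 / h ^ 2) * (m + c) := by
  have hd1 : (0 : ℝ) < d - 1 := by linarith
  have hd2 : (0 : ℝ) < d + 2 := by linarith
  have hnpos : (0 : ℝ) < n := by linarith
  have key : 4 * (n - m) * (d - 1) ^ 2 ≤ 6 * n * (m + 1) * (d + 2) := by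
    rcases Fr2 with h2 | h2
    · have p1 : (0:ℝ) ≤ 6 * n * (d + 2) * (m - d) :=
        mul_nonneg (mul_nonneg (by linarith) hd2.le) (by linarith)
      have e1 : 6 * n * (d + 1) * (d + 2) ≤ 6 * n * (m + 1) * (d + 2) := by nlinarith [p1]
      have p2 : (0:ℝ) ≤ m * (d - 1) ^ 2 := mul_nonneg hm0 (sq_nonneg _)
      have e2 : 4 * (n - m) * (d - 1) ^ 2 ≤ 4 * n * (d - 1) ^ 2 := by nlinarith [p2]
      have p3 : (0:ℝ) ≤ 6 * (d + 1) * (d + 2) - 4 * (d - 1) ^ 2 := by nlinarith [sq_nonneg d]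
      have e3 : 4 * n * (d - 1) ^ 2 ≤ 6 * n * (d + 1) * (d + 2) := by
        nlinarith [mul_nonneg hnpos.le p3]
      linarith
    · have p2 : (0:ℝ) ≤ ((m + 1) - (n - m)) * (d - 1) ^ 2 :=
        mul_nonneg (by linarith) (sq_nonneg _)
      have e2 : 4 * (n - m) * (d - 1) ^ 2 ≤ 4 * (m + 1) * (d - 1) ^ 2 := by nlinarith [p2]
      have i0 : 6 * (d + 1) * (d + 2) ≤ 6 * n * (d + 2) := by
        nlinarith [mul_le_mul_of_nonneg_right Fr3 hd2.le]
      have i1 : (0:ℝ) ≤ 6 * n * (d + 2) - 4 * (d - 1) ^ 2 := by nlinarith [i0]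
      have e3 : 4 * (m + 1) * (d - 1) ^ 2 ≤ 6 * n * (m + 1) * (d + 2) := by
        nlinarith [mul_nonneg (by linarith : (0:ℝ) ≤ m + 1) i1]
      linarith
  have step1 : k - m ≤ 4 * (n - m) / (d + 2) := by
    rw [le_div_iff₀ hd2]
    nlinarith [Fr1]
  have step2 : 4 * (n - m) / (d + 2) ≤ 6 * n * (m + 1) / (d - 1) ^ 2 := by
    rw [div_le_div_iff₀ hd2 (by positivity : (0:ℝ) < (d - 1) ^ 2)]
    nlinarith [key]
  have step3 : 6 * n * (m + 1) / (d - 1) ^ 2 ≤ (6 / h ^ 2) * (m + 1) := by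
    rw [div_mul_eq_mul_div, div_le_div_iff₀ (by positivity : (0:ℝ) < (d - 1) ^ 2)
      (by positivity : (0:ℝ) < h ^ 2)]
    nlinarith [mul_le_mul_of_nonneg_left F7 (by linarith : (0:ℝ) ≤ 6 * (m + 1))]
  have hH : (0 : ℝ) ≤ 6 / h ^ 2 := by positivity
  have final : k ≤ m + (6 / h ^ 2) * (m + 1) := by linarith
  nlinarith [mul_nonneg hH (by linarith : (0:ℝ) ≤ c - 1), mul_nonneg hH hm0, final, Fr5]


/-- For a connected graph whose minimum degree `δ` satisfies `δ ≥ 3` and `δ ≥ h·√n + 1`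
(`h > 0` real), and a maximum matching `M`, `OPT(G) ≤ (1 + 6/h²)·ALG(G, M)`. -/
theorem opt_le_alg_sqrt_minDegree {V : Type*} [Fintype V] (G : SimpleGraph V)
    (hconn : G.Connected) (h : ℝ) (hh : 0 < h) (δ : ℕ)
    (hδ3 : 3 ≤ δ) (hδn : h * Real.sqrt (Fintype.card V) + 1 ≤ (δ : ℝ))
    (hδ : ∀ v : V, δ ≤ (G.neighborSet v).ncard)
    (M : Set (Sym2 V)) (hM : IsMatchingSet G M)
    (hmax : ∀ M' : Set (Sym2 V), IsMatchingSet G M' → M'.ncard ≤ M.ncard) :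
    (OPT G : ℝ) ≤ (1 + 6 / h ^ 2) * (ALG G M : ℝ) := by
  classical
  haveI : Nonempty V := hconn.nonempty
  obtain ⟨C, hC, hCk⟩ := exists_opt G
  set n' : ℕ := Fintype.card V with hn'
  set m' : ℕ := M.ncard with hm'
  set c' : ℕ := Nat.card (G.deleteEdges M).ConnectedComponent with hc'
  have hn1 : δ + 1 ≤ n' := by
    have v : V := Classical.arbitrary V
    have hsub : (G.neighborSet v).toFinite.toFinset ⊆ Finset.univ.erase v := by
      intro x hx
      rw [Set.Finite.mem_toFinset, mem_neighborSet] at hx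
      exact Finset.mem_erase.mpr ⟨fun hxe => G.irrefl (hxe ▸ hx), Finset.mem_univ x⟩
    have h1 : δ ≤ (Finset.univ.erase v).card := by
      refine le_trans ?_ (Finset.card_le_card hsub)
      rw [← Set.ncard_eq_toFinset_card]
      exact hδ v
    rw [Finset.card_erase_of_mem (Finset.mem_univ v), Finset.card_univ] at h1
    have h2 : 0 < n' := Fintype.card_pos
    omega
  have hc1 : 1 ≤ c' := by
    haveI : Nonempty (G.deleteEdges M).ConnectedComponent :=
      ⟨(G.deleteEdges M).connectedComponentMk (Classical.arbitrary V)⟩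
    exact Nat.card_pos
  have F1 : (OPT G) * (δ + 2) + 4 * m' ≤ m' * (δ + 2) + 4 * n' := by
    rw [← hCk]
    exact coloring_upper G δ hδ3 hδ M hmax C hC
  have F2 : δ ≤ m' ∨ n' ≤ 2 * m' + 1 := matching_lower G δ hδ M hM hmax
  have hALG : (ALG G M : ℝ) = (m' : ℝ) + (c' : ℝ) := by
    rw [ALG]; push_cast; rfl
  rw [hALG]
  set k : ℝ := (OPT G : ℝ) with hk
  set m : ℝ := (m' : ℝ) with hmr
  set n : ℝ := (n' : ℝ) with hnr
  set d : ℝ := (δ : ℝ) with hdr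
  set c : ℝ := (c' : ℝ) with hcr
  have Fr1 : k * (d + 2) + 4 * m ≤ m * (d + 2) + 4 * n := by
    rw [hk, hmr, hnr, hdr]
    exact_mod_cast F1
  have Fr2 : d ≤ m ∨ n ≤ 2 * m + 1 := by
    rcases F2 with h2 | h2
    · left; rw [hdr, hmr]; exact_mod_cast h2
    · right; rw [hnr, hmr]; exact_mod_cast h2
  have Fr3 : d + 1 ≤ n := by rw [hdr, hnr]; exact_mod_cast hn1
  have Fr4 : (3 : ℝ) ≤ d := by rw [hdr]; exact_mod_cast hδ3
  have Fr5 : (1 : ℝ) ≤ c := by rw [hcr]; exact_mod_cast hc1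
  have hm0 : (0 : ℝ) ≤ m := by positivity
  have hk0 : (0 : ℝ) ≤ k := by positivity
  have hnpos : (0 : ℝ) < n := by linarith
  have F7 : h ^ 2 * n ≤ (d - 1) ^ 2 := by
    have hs : h * Real.sqrt n ≤ d - 1 := by linarith [hδn]
    have hs0 : 0 ≤ h * Real.sqrt n := by positivity
    have hmm := mul_self_le_mul_self hs0 hs
    calc h ^ 2 * n = (h * Real.sqrt n) * (h * Real.sqrt n) := by
          rw [mul_mul_mul_comm, ← pow_two, Real.mul_self_sqrt hnpos.le]
      _ ≤ (d - 1) * (d - 1) := hmm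
      _ = (d - 1) ^ 2 := (pow_two _).symm
  exact final_arith k m n d c h Fr1 Fr2 Fr3 Fr4 Fr5 hh F7 hm0 hk0
end

section
/- Let δ and κ be integers with 3 ≤ κ < δ − 3, and let t be a positive integer with t > (δ − 1)²/(δ + 1 − κ) such that h := t·(δ + 1 − κ)/(δ − 1) − (δ − 1) is a positive integer. Then there exists a finite simple graph G with exactly n = κ·t vertices, minimum degree exactly δ, and maximum matching of size exactly t, which admits an edge 2-coloring using at least t·(1 + (κ − 2)/(δ − 1)) colors. -/
/-! Put `e = h + δ - 1 = t(δ + 1 - κ)/(δ - 1)` and `d = t - e = t(κ - 2)/(δ - 1)`, so that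
`κt = (d + e) + (δd + e)`. Take the bipartite graph with sides `A = D ⊔ H` and `B = (D × [δ]) ⊔ H'`,
`|D| = d`, `|H| = |H'| = e`, in which each `a ∈ D` is joined to its block `{a} × [δ]` and each hub
in `H` to all of `B`. Vertices of `D` have degree `δ` and all others degree at least `e ≥ δ`. The
side `A` is a vertex cover and can be matched into `B`, so the maximum matching has size `t = |A|`.
Giving every edge of that matching its own colour, the other edges of each block one colour per
block, and all remaining edges a common colour, every vertex sees at most two colours, and
`t + d = t(1 + (κ - 2)/(δ - 1))` colours are used.
-/

open SimpleGraph

section Iso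

variable {V W : Type*} {G : SimpleGraph V} {G' : SimpleGraph W}

theorem SimpleGraph.Iso.image_incidenceSet (φ : G ≃g G') (v : V) :
    Sym2.map φ '' G.incidenceSet v = G'.incidenceSet (φ v) := by
  ext e
  constructor
  · rintro ⟨e, ⟨he, hv⟩, rfl⟩
    exact ⟨φ.map_mem_edgeSet_iff.mpr he, Sym2.mem_map.mpr ⟨v, hv, rfl⟩⟩
  · rintro ⟨he, hv⟩
    refine ⟨Sym2.map φ.symm e, ⟨φ.symm.map_mem_edgeSet_iff.mpr he, ?_⟩, ?_⟩
    · exact Sym2.mem_map.mpr ⟨φ v, hv, φ.symm_apply_apply v⟩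
    · simp [Sym2.map_map]

theorem SimpleGraph.Iso.image_edgeSet (φ : G ≃g G') : Sym2.map φ '' G.edgeSet = G'.edgeSet := by
  ext e
  constructor
  · rintro ⟨e, he, rfl⟩
    exact φ.map_mem_edgeSet_iff.mpr he
  · intro he
    refine ⟨Sym2.map φ.symm e, φ.symm.map_mem_edgeSet_iff.mpr he, ?_⟩
    simp [Sym2.map_map]

theorem SimpleGraph.Iso.ncard_neighborSet (φ : G ≃g G') (v : V) :
    (G'.neighborSet (φ v)).ncard = (G.neighborSet v).ncard := by
  rw [← φ.image_neighborSet, Set.ncard_image_of_injective _ φ.injective]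

theorem IsMatchingSet.image_iso {M : Set (Sym2 V)} (hM : IsMatchingSet G M) (φ : G ≃g G') :
    IsMatchingSet G' (Sym2.map φ '' M) := by
  refine ⟨?_, ?_⟩
  · rintro _ ⟨e, he, rfl⟩
    exact φ.map_mem_edgeSet_iff.mpr (hM.1 he)
  · rintro _ ⟨e, he, rfl⟩ _ ⟨f, hf, rfl⟩ hef w hwe hwf
    obtain ⟨u, hu, rfl⟩ := Sym2.mem_map.mp hwe
    obtain ⟨u', hu', hu'u⟩ := Sym2.mem_map.mp hwf
    rw [φ.injective hu'u] at hu'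
    exact hM.2 e he f hf (fun h => hef (h ▸ rfl)) u hu hu'

theorem IsEdge2Coloring.comp_iso {C : Sym2 V → ℕ} (hC : IsEdge2Coloring G C) (φ : G ≃g G') :
    IsEdge2Coloring G' (C ∘ Sym2.map φ.symm) := by
  intro w
  rw [Set.image_comp, φ.symm.image_incidenceSet]
  exact hC _

theorem numColors_comp_iso (C : Sym2 V → ℕ) (φ : G ≃g G') :
    numColors G' (C ∘ Sym2.map φ.symm) = numColors G C := by
  rw [numColors, numColors, Set.image_comp, φ.symm.image_edgeSet]

end Iso

section Criteria

variable {V : Type*} {G : SimpleGraph V}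

theorem IsMatchingSet.ncard_le_of_cover {M : Set (Sym2 V)} {S : Set V} (hM : IsMatchingSet G M)
    (hS : S.Finite) (hcover : ∀ e ∈ G.edgeSet, ∃ v ∈ S, v ∈ e) : M.ncard ≤ S.ncard := by
  cases isEmpty_or_nonempty V
  · simp [Set.eq_empty_of_isEmpty M]
  choose! f hfS hfe using hcover
  refine Set.ncard_le_ncard_of_injOn f (fun e he => hfS e (hM.1 he)) ?_ hS
  intro e he e' he' hee'
  by_contra hne
  exact hM.2 e he e' he' hne (f e) (hfe e (hM.1 he)) (hee' ▸ hfe e' (hM.1 he'))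

theorem isEdge2Coloring_of_forall_exists {C : Sym2 V → ℕ}
    (h : ∀ v, ∃ c₁ c₂, ∀ w, G.Adj v w → C s(v, w) = c₁ ∨ C s(v, w) = c₂) :
    IsEdge2Coloring G C := by
  intro v
  obtain ⟨c₁, c₂, hc⟩ := h v
  refine (Set.ncard_le_ncard (t := {c₁, c₂}) ?_).trans ((Set.ncard_insert_le _ _).trans (by simp))
  rintro _ ⟨e, he, rfl⟩
  induction e using Sym2.ind with
  | _ x y =>
    obtain ⟨hxy, rfl | rfl⟩ := G.mk'_mem_incidenceSet_iff.mp he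
    · exact hc y hxy
    · rw [Sym2.eq_swap]
      exact hc x hxy.symm

theorem le_numColors_of_injective [Finite V] {ι : Type*} {C : Sym2 V → ℕ} {χ : ι → ℕ}
    (hχ : Function.Injective χ) (h : ∀ i, χ i ∈ C '' G.edgeSet) : Nat.card ι ≤ numColors G C := by
  rw [← Set.ncard_range_of_injective hχ]
  exact Set.ncard_le_ncard (Set.range_subset_iff.mpr h) (Set.toFinite _)

end Criteria

section Bipartite

variable {α β : Type*}

def SimpleGraph.bipartiteOfRel (R : α → β → Prop) : SimpleGraph (α ⊕ β) where
  Adj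
    | .inl a, .inr b => R a b
    | .inr b, .inl a => R a b
    | _, _ => False
  symm := ⟨by rintro (a | b) (a' | b') h <;> exact h⟩
  loopless := ⟨by rintro (a | b) h <;> exact h⟩

def bipartiteColoring (c : α → β → ℕ) : Sym2 (α ⊕ β) → ℕ :=
  Sym2.lift ⟨fun
    | .inl a, .inr b => c a b
    | .inr b, .inl a => c a b
    | _, _ => 0, by rintro (a | b) (a' | b') <;> rfl⟩

variable {R : α → β → Prop} {a : α} {b : β}

@[simp]
theorem SimpleGraph.bipartiteOfRel_adj_inl_inr : (bipartiteOfRel R).Adj (.inl a) (.inr b) ↔ R a b :=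
  Iff.rfl

@[simp]
theorem SimpleGraph.bipartiteOfRel_adj_inr_inl : (bipartiteOfRel R).Adj (.inr b) (.inl a) ↔ R a b :=
  Iff.rfl

@[simp]
theorem SimpleGraph.bipartiteOfRel_not_adj_inl_inl {a' : α} :
    ¬(bipartiteOfRel R).Adj (.inl a) (.inl a') :=
  id

@[simp]
theorem SimpleGraph.bipartiteOfRel_not_adj_inr_inr {b' : β} :
    ¬(bipartiteOfRel R).Adj (.inr b) (.inr b') :=
  id

theorem SimpleGraph.ncard_neighborSet_bipartiteOfRel_inl :
    ((bipartiteOfRel R).neighborSet (.inl a)).ncard = {b | R a b}.ncard := by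
  rw [← Set.ncard_image_of_injective {b | R a b} (Sum.inr_injective (α := α))]
  congr 1
  ext (a' | b') <;> simp

theorem SimpleGraph.ncard_neighborSet_bipartiteOfRel_inr :
    ((bipartiteOfRel R).neighborSet (.inr b)).ncard = {a | R a b}.ncard := by
  rw [← Set.ncard_image_of_injective {a | R a b} (Sum.inl_injective (β := β))]
  congr 1
  ext (a' | b') <;> simp

theorem SimpleGraph.exists_isMatchingSet_bipartiteOfRel {f : α → β} (hf : f.Injective)
    (hR : ∀ a, R a (f a)) :
    ∃ M, IsMatchingSet (bipartiteOfRel R) M ∧ M.ncard = Nat.card α := by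
  refine ⟨Set.range fun a => s(.inl a, .inr (f a)), ⟨?_, ?_⟩, Set.ncard_range_of_injective ?_⟩
  · rintro _ ⟨a, rfl⟩
    exact hR a
  · rintro _ ⟨a, rfl⟩ _ ⟨a', rfl⟩ hne v hv hv'
    simp only [Sym2.mem_iff] at hv hv'
    rcases hv with rfl | rfl <;> rcases hv' with h | h <;> simp_all [hf.eq_iff]
  · intro a a' h
    exact (by simpa using h : a = a' ∧ _).1

theorem IsMatchingSet.ncard_le_card_left [Finite α] {M : Set (Sym2 (α ⊕ β))}
    (hM : IsMatchingSet (bipartiteOfRel R) M) : M.ncard ≤ Nat.card α := by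
  rw [← Set.ncard_range_of_injective Sum.inl_injective]
  refine hM.ncard_le_of_cover (Set.finite_range _) fun e he => ?_
  induction e using Sym2.ind with
  | _ x y =>
    rcases x with a | b
    · exact ⟨.inl a, ⟨a, rfl⟩, Sym2.mem_mk_left _ _⟩
    · rcases y with a | b'
      · exact ⟨.inl a, ⟨a, rfl⟩, Sym2.mem_mk_right _ _⟩
      · simp at he

theorem isEdge2Coloring_bipartiteColoring {c : α → β → ℕ}
    (hl : ∀ a, ∃ c₁ c₂, ∀ b, R a b → c a b = c₁ ∨ c a b = c₂)
    (hr : ∀ b, ∃ c₁ c₂, ∀ a, R a b → c a b = c₁ ∨ c a b = c₂) :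
    IsEdge2Coloring (bipartiteOfRel R) (bipartiteColoring c) := by
  refine isEdge2Coloring_of_forall_exists ?_
  rintro (a | b)
  · obtain ⟨c₁, c₂, hc⟩ := hl a
    refine ⟨c₁, c₂, ?_⟩
    rintro (a' | b') h
    · exact absurd h bipartiteOfRel_not_adj_inl_inl
    · exact hc b' h
  · obtain ⟨c₁, c₂, hc⟩ := hr b
    refine ⟨c₁, c₂, ?_⟩
    rintro (a' | b') h
    · exact hc a' h
    · exact absurd h bipartiteOfRel_not_adj_inr_inr

theorem mem_image_bipartiteColoring {c : α → β → ℕ} {k : ℕ} (h : R a b) (hk : c a b = k) :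
    k ∈ bipartiteColoring c '' (bipartiteOfRel R).edgeSet :=
  ⟨s(.inl a, .inr b), h, hk⟩

end Bipartite

section TightExample

def tightRel (d e δ : ℕ) : Fin d ⊕ Fin e → Fin d × Fin δ ⊕ Fin e → Prop
  | .inl a, .inl (a', _) => a' = a
  | .inl _, .inr _ => False
  | .inr _, _ => True

def tightColor (d e δ : ℕ) : Fin d ⊕ Fin e → Fin d × Fin δ ⊕ Fin e → ℕ
  | .inl a, .inl (_, j) => if j.val = 0 then 2 * a + 1 else 2 * a + 2
  | .inr i, .inr i' => if i' = i then 2 * d + 1 + i else 0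
  | _, _ => 0

abbrev tightGraph (d e δ : ℕ) : SimpleGraph ((Fin d ⊕ Fin e) ⊕ (Fin d × Fin δ ⊕ Fin e)) :=
  bipartiteOfRel (tightRel d e δ)

variable {d e δ : ℕ}

theorem ncard_neighborSet_tightGraph_inl_inl (a : Fin d) :
    ((tightGraph d e δ).neighborSet (.inl (.inl a))).ncard = δ := by
  rw [ncard_neighborSet_bipartiteOfRel_inl]
  have : {b | tightRel d e δ (.inl a) b} = Set.range fun j : Fin δ => .inl (a, j) := by
    ext ((⟨a', j⟩ | i)) <;> simp [tightRel, eq_comm]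
  rw [this, Set.ncard_range_of_injective, Nat.card_eq_fintype_card, Fintype.card_fin]
  intro j j' h
  simpa using h

theorem le_ncard_neighborSet_tightGraph (hδe : δ ≤ e) (v) :
    δ ≤ ((tightGraph d e δ).neighborSet v).ncard := by
  have hubs {γ : Type} [Finite γ] {s : Set (γ ⊕ Fin e)} (hs : Set.range .inr ⊆ s) :
      δ ≤ s.ncard := by
    calc δ ≤ (Set.range (Sum.inr : Fin e → γ ⊕ Fin e)).ncard := by
          rwa [Set.ncard_range_of_injective Sum.inr_injective, Nat.card_eq_fintype_card,
            Fintype.card_fin]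
      _ ≤ s.ncard := Set.ncard_le_ncard hs
  rcases v with ((a | i) | b)
  · exact (ncard_neighborSet_tightGraph_inl_inl a).ge
  · rw [ncard_neighborSet_bipartiteOfRel_inl]
    exact hubs fun _ _ => trivial
  · rw [ncard_neighborSet_bipartiteOfRel_inr]
    exact hubs (by rintro _ ⟨i, rfl⟩; trivial)

theorem exists_isMatchingSet_tightGraph (hδ : 0 < δ) :
    ∃ M, IsMatchingSet (tightGraph d e δ) M ∧ M.ncard = d + e := by
  have hf : (Sum.map (fun a => (a, (⟨0, hδ⟩ : Fin δ))) id : Fin d ⊕ Fin e → _).Injective :=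
    Sum.map_injective.mpr ⟨fun a a' h => (Prod.ext_iff.mp h).1, Function.injective_id⟩
  obtain ⟨M, hM, hcard⟩ := exists_isMatchingSet_bipartiteOfRel (R := tightRel d e δ) hf
    (by rintro (a | i); exacts [rfl, trivial])
  exact ⟨M, hM, by simpa using hcard⟩

theorem isEdge2Coloring_tightColor :
    IsEdge2Coloring (tightGraph d e δ) (bipartiteColoring (tightColor d e δ)) := by
  refine isEdge2Coloring_bipartiteColoring ?_ ?_
  · rintro (a | i)
    · refine ⟨2 * a + 1, 2 * a + 2, ?_⟩
      rintro (⟨a', j⟩ | i) h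
      · simp only [tightColor]
        split_ifs <;> simp
      · exact h.elim
    · refine ⟨2 * d + 1 + i, 0, ?_⟩
      rintro (b | i') -
      · exact .inr rfl
      · simp only [tightColor]
        split_ifs <;> simp
  · rintro (⟨a, j⟩ | i)
    · refine ⟨tightColor d e δ (.inl a) (.inl (a, j)), 0, ?_⟩
      rintro (a' | i') h
      · cases (h : a = a')
        exact .inl rfl
      · exact .inr rfl
    · refine ⟨2 * d + 1 + i, 0, ?_⟩
      rintro (a | i') h
      · exact h.elim
      · simp only [tightColor]
        split_ifs with hi <;> simp [hi]

theorem le_numColors_tightColor (hδ : 2 ≤ δ) :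
    2 * d + e ≤ numColors (tightGraph d e δ) (bipartiteColoring (tightColor d e δ)) := by
  let χ : (Fin d ⊕ Fin d) ⊕ Fin e → ℕ :=
    Sum.elim (Sum.elim (fun a => 2 * a + 1) (fun a => 2 * a + 2)) (fun i => 2 * d + 1 + i)
  have hχ : χ.Injective := by
    rintro ((a | a) | i) ((a' | a') | i') h <;> simp [χ, Fin.ext_iff] at h ⊢ <;> omega
  have hrealized (k) :
      χ k ∈ bipartiteColoring (tightColor d e δ) '' (tightGraph d e δ).edgeSet := by
    rcases k with ((a | a) | i)
    · exact mem_image_bipartiteColoring (R := tightRel d e δ) (a := .inl a)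
        (b := .inl (a, ⟨0, by omega⟩)) rfl (by simp [tightColor, χ])
    · exact mem_image_bipartiteColoring (R := tightRel d e δ) (a := .inl a)
        (b := .inl (a, ⟨1, by omega⟩)) rfl (by simp [tightColor, χ])
    · exact mem_image_bipartiteColoring (R := tightRel d e δ) (a := .inr i) (b := .inr i) trivial
        (by simp [tightColor, χ])
  have := le_numColors_of_injective hχ hrealized
  simp only [Nat.card_eq_fintype_card, Fintype.card_sum, Fintype.card_fin] at this
  omega

end TightExample

theorem exists_tight_parameters {δ κ t h : ℕ} (hκ : 3 ≤ κ) (hδ : 2 ≤ δ) (hh0 : 0 < h)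
    (hhval : (h : ℝ) = (t : ℝ) * ((δ : ℝ) + 1 - (κ : ℝ)) / ((δ : ℝ) - 1) - ((δ : ℝ) - 1)) :
    ∃ d e, t = d + e ∧ 0 < d ∧ δ ≤ e ∧ κ * t = d + e + (d * δ + e) ∧
      (t : ℝ) * (1 + ((κ : ℝ) - 2) / ((δ : ℝ) - 1)) = ((2 * d + e : ℕ) : ℝ) := by
  have hδ1 : (0 : ℝ) < δ - 1 := by
    have : (2 : ℝ) ≤ δ := by exact_mod_cast hδ
    linarith
  have hκ3 : (3 : ℝ) ≤ κ := by exact_mod_cast hκ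
  set e := h + δ - 1 with he_def
  have he : (e : ℝ) = h + δ - 1 := by rw [Nat.cast_sub (by omega)]; push_cast; ring
  have hkey : (e : ℝ) * (δ - 1) = t * (δ + 1 - κ) := by
    rw [he, hhval]
    field_simp
    ring
  have het : e ≤ t := by
    have : (e : ℝ) ≤ t := le_of_mul_le_mul_right (by nlinarith) hδ1
    exact_mod_cast this
  obtain ⟨d, rfl⟩ := Nat.exists_eq_add_of_le' het
  push_cast at hkey
  have hd : (d : ℝ) * (δ - 1) = (d + e) * (κ - 2) := by linear_combination -hkey
  refine ⟨d, e, rfl, ?_, by omega, ?_, ?_⟩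
  · have he0 : (0 : ℝ) < e := by exact_mod_cast (show 0 < e by omega)
    have : (0 : ℝ) < d := by nlinarith
    exact_mod_cast this
  · have : ((κ * (d + e) : ℕ) : ℝ) = ((d + e + (d * δ + e) : ℕ) : ℝ) := by
      push_cast
      linear_combination -hd
    exact_mod_cast this
  · push_cast
    field_simp
    linear_combination -hd

theorem tight_example_general_general {δ κ t h : ℕ} (hκ3 : 3 ≤ κ) (hκδ : κ + 3 < δ)
    (hh0 : 0 < h)
    (hhval : (h : ℝ) = (t : ℝ) * ((δ : ℝ) + 1 - (κ : ℝ)) / ((δ : ℝ) - 1) - ((δ : ℝ) - 1)) :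
    ∃ G : SimpleGraph (Fin (κ * t)),
      (∀ v, δ ≤ (G.neighborSet v).ncard) ∧
      (∃ v, (G.neighborSet v).ncard = δ) ∧
      (∃ M : Set (Sym2 (Fin (κ * t))), IsMatchingSet G M ∧ M.ncard = t ∧
        ∀ M' : Set (Sym2 (Fin (κ * t))), IsMatchingSet G M' → M'.ncard ≤ t) ∧
      ∃ C : Sym2 (Fin (κ * t)) → ℕ, IsEdge2Coloring G C ∧
        (t : ℝ) * (1 + ((κ : ℝ) - 2) / ((δ : ℝ) - 1)) ≤ (numColors G C : ℝ) := by
  obtain ⟨d, e, rfl, hd, hδe, hcard, hcolors⟩ :=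
    exists_tight_parameters hκ3 (by omega : 2 ≤ δ) hh0 hhval
  let φ := Iso.map (Fintype.equivFinOfCardEq (by simpa using hcard.symm) : _ ≃ Fin (κ * (d + e)))
    (tightGraph d e δ)
  obtain ⟨M, hM, hMcard⟩ := exists_isMatchingSet_tightGraph (d := d) (e := e) (by omega : 0 < δ)
  refine ⟨_, fun v => ?_, ⟨φ (.inl (.inl ⟨0, hd⟩)), ?_⟩,
    ⟨Sym2.map φ '' M, hM.image_iso φ, ?_, fun M' hM' => ?_⟩,
    _, isEdge2Coloring_tightColor.comp_iso φ, ?_⟩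
  · rw [← φ.apply_symm_apply v, φ.ncard_neighborSet]
    exact le_ncard_neighborSet_tightGraph hδe _
  · rw [φ.ncard_neighborSet, ncard_neighborSet_tightGraph_inl_inl]
  · rwa [Set.ncard_image_of_injective _ (Sym2.map.injective φ.injective)]
  · have := (hM'.image_iso φ.symm).ncard_le_card_left
    rwa [Set.ncard_image_of_injective _ (Sym2.map.injective φ.symm.injective),
      Nat.card_eq_fintype_card, Fintype.card_sum, Fintype.card_fin, Fintype.card_fin] at this
  · rw [numColors_comp_iso, hcolors]
    exact_mod_cast le_numColors_tightColor (by omega)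

/-- Tightness of the general bound: for `3 ≤ κ < δ − 3` and suitable `t`, there is a graph
on `κ·t` vertices with minimum degree exactly `δ` and maximum matching of size exactly `t`
admitting an edge 2-coloring with at least `t·(1 + (κ − 2)/(δ − 1))` colors. -/
theorem tight_example_general {δ κ t h : ℕ} (hκ3 : 3 ≤ κ) (hκδ : κ + 3 < δ) (ht0 : 0 < t)
    (htlarge : ((δ : ℝ) - 1) ^ 2 / ((δ : ℝ) + 1 - (κ : ℝ)) < (t : ℝ))
    (hh0 : 0 < h)
    (hhval : (h : ℝ) = (t : ℝ) * ((δ : ℝ) + 1 - (κ : ℝ)) / ((δ : ℝ) - 1) - ((δ : ℝ) - 1)) :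
    ∃ G : SimpleGraph (Fin (κ * t)),
      (∀ v, δ ≤ (G.neighborSet v).ncard) ∧
      (∃ v, (G.neighborSet v).ncard = δ) ∧
      (∃ M : Set (Sym2 (Fin (κ * t))), IsMatchingSet G M ∧ M.ncard = t ∧
        ∀ M' : Set (Sym2 (Fin (κ * t))), IsMatchingSet G M' → M'.ncard ≤ t) ∧
      ∃ C : Sym2 (Fin (κ * t)) → ℕ, IsEdge2Coloring G C ∧
        (t : ℝ) * (1 + ((κ : ℝ) - 2) / ((δ : ℝ) - 1)) ≤ (numColors G C : ℝ) :=
  tight_example_general_general hκ3 hκδ hh0 hhval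
end

section
/- Let d ≥ 2 and let G be a finite simple d-regular graph on n vertices that admits a proper d-edge-coloring (an assignment of one of d colors to each edge so that edges sharing an endpoint receive different colors). Then there exists a finite simple d-regular graph G' on n·d vertices that contains a perfect matching M such that the graph G' − M obtained by deleting the edges of M has exactly n connected components; consequently, G' admits an edge 2-coloring using exactly n·d/2 + n colors. -/
open SimpleGraph

/-- code for unordered pairs of naturals, offset by `n`. -/
def sym2Code (n : ℕ) : Sym2 ℕ → ℕ :=
  Sym2.lift ⟨fun a b => n + n * (min a b) + max a b, by
    intro a b; simp [Nat.min_comm a b, Nat.max_comm a b]⟩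

lemma sym2Code_ge (n a b : ℕ) : n ≤ sym2Code n s(a, b) := by
  simp only [sym2Code, Sym2.lift_mk]
  omega

lemma sym2Code_inj {n a b a' b' : ℕ} (ha : a < n) (hb : b < n) (ha' : a' < n) (hb' : b' < n)
    (h : sym2Code n s(a, b) = sym2Code n s(a', b')) : s(a, b) = s(a', b') := by
  simp only [sym2Code, Sym2.lift_mk] at h
  have h1 : n * min a b + max a b = n * min a' b' + max a' b' := by omega
  have hmx : max a b < n := by omega
  have hmx' : max a' b' < n := by omega
  have h2 : max a b = max a' b' := by
    have e1 : (n * min a b + max a b) % n = max a b := by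
      rw [Nat.mul_add_mod]; exact Nat.mod_eq_of_lt hmx
    have e2 : (n * min a' b' + max a' b') % n = max a' b' := by
      rw [Nat.mul_add_mod]; exact Nat.mod_eq_of_lt hmx'
    rw [← e1, ← e2, h1]
  have h3 : min a b = min a' b' := by
    have hn : 0 < n := by omega
    have hmm : n * min a b = n * min a' b' := by omega
    exact Nat.eq_of_mul_eq_mul_left hn hmm
  rw [Sym2.eq_iff]
  omega

/-- Blow-up: each vertex of `G` becomes a copy of `K_d`, and for each edge of `G`
of color `i` we add a matching edge between the `i`-th vertices of the two cliques. -/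
def blowup {V : Type*} {d : ℕ} (G : SimpleGraph V) (C : Sym2 V → Fin d) :
    SimpleGraph (V × Fin d) where
  Adj a b := (a.1 = b.1 ∧ a.2 ≠ b.2) ∨ (G.Adj a.1 b.1 ∧ a.2 = b.2 ∧ C s(a.1, b.1) = a.2)
  symm := by
    constructor
    rintro ⟨u,i⟩ ⟨v,j⟩ (⟨h1,h2⟩ | ⟨h1,h2,h3⟩)
    · exact Or.inl ⟨h1.symm, h2.symm⟩
    · refine Or.inr ⟨h1.symm, h2.symm, ?_⟩
      rw [Sym2.eq_swap] at h3; rw [← h2]; exact h3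
  loopless := by
    constructor
    rintro ⟨u,i⟩ (⟨_,h⟩|⟨h,_⟩)
    · exact h rfl
    · exact G.loopless.irrefl u h

lemma exists_unique_colored_neighbor {V : Type*} [Fintype V] {d : ℕ}
    (G : SimpleGraph V) (hreg : ∀ v : V, (G.neighborSet v).ncard = d)
    (C : Sym2 V → Fin d)
    (hC : ∀ e ∈ G.edgeSet, ∀ f ∈ G.edgeSet, e ≠ f → (∃ v : V, v ∈ e ∧ v ∈ f) → C e ≠ C f)
    (u : V) (i : Fin d) : ∃! v, G.Adj u v ∧ C s(u, v) = i := by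
  classical
  set φ : G.neighborSet u → Fin d := fun v => C s(u, (v : V)) with hφ
  have hinj : Function.Injective φ := by
    rintro ⟨v, hv⟩ ⟨w, hw⟩ h
    simp only [φ] at h
    by_contra hne
    have hne' : v ≠ w := by simpa using hne
    exact hC s(u, v) ((G.mem_edgeSet).2 hv) s(u, w) ((G.mem_edgeSet).2 hw)
      (fun hh => hne' (Sym2.congr_right.1 hh)) ⟨u, by simp, by simp⟩ h
  have hcard : Fintype.card (G.neighborSet u) = d := by
    rw [← Nat.card_eq_fintype_card, Nat.card_coe_set_eq, hreg u]
  have hbij : Function.Bijective φ :=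
    (Fintype.bijective_iff_injective_and_card φ).2 ⟨hinj, by simp [hcard]⟩
  obtain ⟨⟨v, hv⟩, hφv⟩ := hbij.2 i
  refine ⟨v, ⟨hv, hφv⟩, ?_⟩
  rintro w ⟨hw, hcw⟩
  have := hinj (a₁ := ⟨w, hw⟩) (a₂ := ⟨v, hv⟩) (by simp only [φ]; rw [hcw, ← hφv])
  exact congrArg Subtype.val this

/-- Tight example for graphs with perfect matching: from a `d`-regular graph `G` on `n`
vertices with a proper `d`-edge-coloring, one gets a `d`-regular graph `G'` on `n·d`
vertices with a perfect matching `M` such that `G' − M` has exactly `n` components;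
consequently `G'` has an edge 2-coloring with exactly `n·d/2 + n` colors. -/
theorem tight_example_perfectMatching {V : Type*} [Fintype V] (d : ℕ) (hd : 2 ≤ d)
    (G : SimpleGraph V) (hreg : ∀ v : V, (G.neighborSet v).ncard = d)
    (hcol : ∃ C : Sym2 V → Fin d, ∀ e ∈ G.edgeSet, ∀ f ∈ G.edgeSet,
      e ≠ f → (∃ v : V, v ∈ e ∧ v ∈ f) → C e ≠ C f) :
    ∃ G' : SimpleGraph (Fin (Fintype.card V * d)),
      (∀ v, (G'.neighborSet v).ncard = d) ∧
      ∃ M : Set (Sym2 (Fin (Fintype.card V * d))),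
        IsMatchingSet G' M ∧ (∀ v, ∃ e ∈ M, v ∈ e) ∧
        Nat.card (G'.deleteEdges M).ConnectedComponent = Fintype.card V ∧
        ∃ C' : Sym2 (Fin (Fintype.card V * d)) → ℕ, IsEdge2Coloring G' C' ∧
          numColors G' C' = Fintype.card V * d / 2 + Fintype.card V := by
  classical
  obtain ⟨C, hC⟩ := hcol
  rcases isEmpty_or_nonempty V with hV | hV
  · -- degenerate case : no vertices
    have hn0 : Fintype.card V = 0 := Fintype.card_eq_zero
    haveI hE : IsEmpty (Fin (Fintype.card V * d)) := by
      rw [hn0, Nat.zero_mul]; infer_instance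
    refine ⟨⊥, fun v => isEmptyElim v, ∅, ⟨by simp, by simp⟩, fun v => isEmptyElim v, ?_,
      fun _ => 0, fun v => isEmptyElim v, ?_⟩
    · haveI : IsEmpty ((⊥ : SimpleGraph (Fin (Fintype.card V * d))).deleteEdges
          (∅ : Set (Sym2 (Fin (Fintype.card V * d))))).ConnectedComponent :=
        ⟨fun c => c.ind fun v => isEmptyElim v⟩
      rw [Nat.card_of_isEmpty, hn0]
    · simp [numColors, hn0]
  -- main case
  have hdpos : 0 < d := lt_of_lt_of_le two_pos hd
  have hd1 : 1 < d := lt_of_lt_of_le one_lt_two hd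
  set n := Fintype.card V with hn
  have hnpos : 0 < n := Fintype.card_pos
  set ev : V ≃ Fin n := Fintype.equivFin V with hev
  set e : Fin (n * d) ≃ V × Fin d :=
    finProdFinEquiv.symm.trans (Equiv.prodCongr ev.symm (Equiv.refl (Fin d))) with he
  have key : ∀ (u : V) (i : Fin d), ∃! v, G.Adj u v ∧ C s(u, v) = i :=
    exists_unique_colored_neighbor G hreg C hC
  set H : SimpleGraph (V × Fin d) := blowup G C with hH
  set G' : SimpleGraph (Fin (n * d)) := H.comap e with hG'
  have hG'adj : ∀ x y, G'.Adj x y ↔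
      (((e x).1 = (e y).1 ∧ (e x).2 ≠ (e y).2) ∨
        (G.Adj (e x).1 (e y).1 ∧ (e x).2 = (e y).2 ∧ C s((e x).1, (e y).1) = (e x).2)) :=
    fun x y => Iff.rfl
  have hHadj : ∀ a b : V × Fin d, H.Adj a b ↔
      ((a.1 = b.1 ∧ a.2 ≠ b.2) ∨ (G.Adj a.1 b.1 ∧ a.2 = b.2 ∧ C s(a.1, b.1) = a.2)) :=
    fun a b => Iff.rfl
  -- the matching
  set M : Set (Sym2 (Fin (n * d))) :=
    {z | ∃ u v i, G.Adj u v ∧ C s(u, v) = i ∧ Sym2.map e z = s((u, i), (v, i))} with hM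
  have hPmem : ∀ a b : V × Fin d,
      (∃ u v i, G.Adj u v ∧ C s(u, v) = i ∧ s(a, b) = s((u, i), (v, i))) ↔
      (G.Adj a.1 b.1 ∧ a.2 = b.2 ∧ C s(a.1, b.1) = a.2) := by
    rintro ⟨u0, i0⟩ ⟨v0, j0⟩
    constructor
    · rintro ⟨u, v, i, hadj, hc, hz⟩
      rw [Sym2.eq_iff] at hz
      rcases hz with ⟨h1, h2⟩ | ⟨h1, h2⟩
      · rw [Prod.mk.injEq] at h1 h2
        obtain ⟨rfl, rfl⟩ := h1; obtain ⟨rfl, rfl⟩ := h2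
        exact ⟨hadj, rfl, hc⟩
      · rw [Prod.mk.injEq] at h1 h2
        obtain ⟨rfl, rfl⟩ := h1; obtain ⟨rfl, rfl⟩ := h2
        refine ⟨hadj.symm, rfl, ?_⟩
        rw [Sym2.eq_swap]; exact hc
    · rintro ⟨hadj, hij, hc⟩
      dsimp only at hadj hij hc
      obtain rfl : i0 = j0 := hij
      exact ⟨u0, v0, i0, hadj, hc, rfl⟩
  have hMmem : ∀ x y, s(x, y) ∈ M ↔
      (G.Adj (e x).1 (e y).1 ∧ (e x).2 = (e y).2 ∧ C s((e x).1, (e y).1) = (e x).2) := by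
    intro x y
    rw [hM, Set.mem_setOf_eq, Sym2.map_pair_eq]
    exact hPmem (e x) (e y)
  -- regularity
  have hnbrH : ∀ a : V × Fin d, (H.neighborSet a).ncard = d := by
    rintro ⟨u, i⟩
    obtain ⟨v0, ⟨hadj0, hc0⟩, huniq⟩ := key u i
    set ψ : Fin d → V × Fin d := fun j => if j = i then (v0, i) else (u, j) with hψ
    have hinj : Function.Injective ψ := by
      intro j k hjk
      simp only [hψ] at hjk
      by_cases hj : j = i <;> by_cases hk : k = i
      · rw [hj, hk]
      · exfalso; rw [if_pos hj, if_neg hk, Prod.mk.injEq] at hjk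
        exact hk hjk.2.symm
      · exfalso; rw [if_neg hj, if_pos hk, Prod.mk.injEq] at hjk
        exact hj hjk.2
      · rw [if_neg hj, if_neg hk, Prod.mk.injEq] at hjk; exact hjk.2
    have hset : H.neighborSet (u, i) = Set.range ψ := by
      ext b
      rw [mem_neighborSet, hHadj]
      constructor
      · intro hb
        obtain ⟨v, j⟩ := b
        rcases hb with ⟨h1, h2⟩ | ⟨h1, h2, h3⟩
        · dsimp only at h1 h2
          refine ⟨j, ?_⟩
          simp only [hψ]
          rw [if_neg (fun h : j = i => h2 h.symm)]
          rw [h1]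
        · dsimp only at h1 h2 h3
          have hv : v = v0 := huniq v ⟨h1, h3⟩
          refine ⟨i, ?_⟩
          simp only [hψ, if_pos rfl]
          rw [h2, hv]
      · rintro ⟨j, rfl⟩
        simp only [hψ]
        by_cases hj : j = i
        · rw [if_pos hj]
          exact Or.inr ⟨hadj0, rfl, hc0⟩
        · rw [if_neg hj]
          exact Or.inl ⟨rfl, fun h => hj h.symm⟩
    rw [hset, ← Set.image_univ, Set.ncard_image_of_injective _ hinj, Set.ncard_univ,
      Nat.card_eq_fintype_card, Fintype.card_fin]
  have hnbr : ∀ x, (G'.neighborSet x).ncard = d := by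
    intro x
    have himg : G'.neighborSet x = e.symm '' (H.neighborSet (e x)) := by
      ext y
      rw [mem_neighborSet]
      constructor
      · intro h
        exact ⟨e y, h, e.symm_apply_apply y⟩
      · rintro ⟨b, hb, rfl⟩
        show H.Adj (e x) (e (e.symm b))
        rwa [e.apply_symm_apply]
    rw [himg, Set.ncard_image_of_injective _ e.symm.injective, hnbrH]
  -- matching properties
  have hsub : M ⊆ G'.edgeSet := by
    intro z
    induction z using Sym2.ind with
    | _ x y =>
      intro hz
      exact (G'.mem_edgeSet).2 ((hG'adj x y).2 (Or.inr ((hMmem x y).1 hz)))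
  have hdisj : ∀ e₁ ∈ M, ∀ e₂ ∈ M, e₁ ≠ e₂ → ∀ v, v ∈ e₁ → v ∉ e₂ := by
    intro e₁ h1 e₂ h2 hne x hx1 hx2
    obtain ⟨y1, rfl⟩ := Sym2.mem_iff_exists.mp hx1
    obtain ⟨y2, rfl⟩ := Sym2.mem_iff_exists.mp hx2
    obtain ⟨ha1, hi1, hc1⟩ := (hMmem x y1).1 h1
    obtain ⟨ha2, hi2, hc2⟩ := (hMmem x y2).1 h2
    obtain ⟨v0, _, huniq⟩ := key (e x).1 (e x).2
    have e1 : (e y1).1 = v0 := huniq _ ⟨ha1, hc1⟩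
    have e2 : (e y2).1 = v0 := huniq _ ⟨ha2, hc2⟩
    apply hne
    have hyy : e y1 = e y2 := Prod.ext (e1.trans e2.symm) (hi1.symm.trans hi2)
    rw [e.injective hyy]
  have hperf : ∀ x, ∃ z ∈ M, x ∈ z := by
    intro x
    obtain ⟨v0, ⟨hadj0, hc0⟩, _⟩ := key (e x).1 (e x).2
    refine ⟨s(x, e.symm (v0, (e x).2)), ?_, Sym2.mem_mk_left _ _⟩
    refine (hMmem _ _).2 ?_
    rw [e.apply_symm_apply]
    exact ⟨hadj0, rfl, hc0⟩
  -- component count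
  have hcomp : Nat.card (G'.deleteEdges M).ConnectedComponent = n := by
    have hDadj : ∀ x y, (G'.deleteEdges M).Adj x y ↔
        ((e x).1 = (e y).1 ∧ (e x).2 ≠ (e y).2) := by
      intro x y
      rw [deleteEdges_adj]
      constructor
      · rintro ⟨hadj, hnm⟩
        rcases (hG'adj x y).1 hadj with h | h
        · exact h
        · exact absurd ((hMmem x y).2 h) hnm
      · intro h
        exact ⟨(hG'adj x y).2 (Or.inl h), fun hm => h.2 ((hMmem x y).1 hm).2.1⟩
    have hfst : ∀ x y, (G'.deleteEdges M).Reachable x y → (e x).1 = (e y).1 := by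
      intro x y h
      obtain ⟨w⟩ := h
      induction w with
      | nil => rfl
      | cons hadj _ ih => exact ((hDadj _ _).1 hadj).1.trans ih
    set f : (G'.deleteEdges M).ConnectedComponent → V :=
      ConnectedComponent.lift (fun x => (e x).1) (fun v w p _ => hfst v w ⟨p⟩) with hf
    have hfmk : ∀ x, f ((G'.deleteEdges M).connectedComponentMk x) = (e x).1 :=
      fun x => rfl
    have hfbij : Function.Bijective f := by
      constructor
      · intro c c' hcc
        obtain ⟨x, rfl⟩ := c.exists_rep
        obtain ⟨y, rfl⟩ := c'.exists_rep
        have hcc1 : (e x).1 = (e y).1 := hcc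
        by_cases hxy : x = y
        · rw [hxy]
        · have hsnd : (e x).2 ≠ (e y).2 := fun h2 => hxy (e.injective (Prod.ext hcc1 h2))
          exact ConnectedComponent.sound ((hDadj x y).2 ⟨hcc1, hsnd⟩).reachable
      · intro v
        refine ⟨(G'.deleteEdges M).connectedComponentMk (e.symm (v, ⟨0, hdpos⟩)), ?_⟩
        rw [hfmk, e.apply_symm_apply]
    calc Nat.card (G'.deleteEdges M).ConnectedComponent
        = Nat.card V := Nat.card_eq_of_bijective f hfbij
      _ = n := Nat.card_eq_fintype_card
  -- coloring
  set g : V → ℕ := fun v => (ev v : ℕ) with hg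
  have hginj : Function.Injective g := fun a b h => ev.injective (Fin.val_injective h)
  have hglt : ∀ v, g v < n := fun v => (ev v).isLt
  set C' : Sym2 (Fin (n * d)) → ℕ := fun z =>
    Sym2.lift ⟨fun a b => if a.1 = b.1 then g a.1 else sym2Code n s(g a.1, g b.1), by
      intro a b
      by_cases h : a.1 = b.1
      · simp [h]
      · simp only [h, Ne.symm h, if_neg, if_false]
        rw [Sym2.eq_swap]⟩ (Sym2.map e z) with hC'
  have hC'pair : ∀ x y, C' s(x, y) =
      if (e x).1 = (e y).1 then g (e x).1 else sym2Code n s(g (e x).1, g (e y).1) := by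
    intro x y
    simp only [hC', Sym2.map_pair_eq, Sym2.lift_mk]
  have h2col : IsEdge2Coloring G' C' := by
    intro x
    obtain ⟨v0, ⟨hadj0, hc0⟩, huniq⟩ := key (e x).1 (e x).2
    have hsubc : C' '' G'.incidenceSet x ⊆
        {g (e x).1, sym2Code n s(g (e x).1, g v0)} := by
      rintro c ⟨z, hz, rfl⟩
      obtain ⟨hzE, hxz⟩ := hz
      obtain ⟨y, rfl⟩ := Sym2.mem_iff_exists.mp hxz
      have hadj : G'.Adj x y := (G'.mem_edgeSet).1 hzE
      rw [Set.mem_insert_iff, Set.mem_singleton_iff]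
      rcases (hG'adj x y).1 hadj with ⟨h1, _⟩ | ⟨h1, _, h3⟩
      · left; rw [hC'pair, if_pos h1]
      · right
        have hv : (e y).1 = v0 := huniq _ ⟨h1, h3⟩
        rw [hC'pair, if_neg (G.ne_of_adj h1), hv]
    calc (C' '' G'.incidenceSet x).ncard
        ≤ ({g (e x).1, sym2Code n s(g (e x).1, g v0)} : Set ℕ).ncard :=
          Set.ncard_le_ncard hsubc (Set.toFinite _)
      _ ≤ 2 := by
          refine le_trans (Set.ncard_insert_le _ _) ?_
          rw [Set.ncard_singleton]
  have hnum : numColors G' C' = n * d / 2 + n := by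
    set B : Set ℕ := (fun z => sym2Code n (Sym2.map g z)) '' G.edgeSet with hB
    have hA : C' '' G'.edgeSet = Set.range g ∪ B := by
      apply Set.Subset.antisymm
      · rintro c ⟨z, hz, rfl⟩
        revert hz
        induction z using Sym2.ind with
        | _ x y =>
          intro hz
          have hadj : G'.Adj x y := (G'.mem_edgeSet).1 hz
          rcases (hG'adj x y).1 hadj with ⟨h1, _⟩ | ⟨h1, _, _⟩
          · left
            exact ⟨(e x).1, by rw [hC'pair, if_pos h1]⟩
          · right
            refine ⟨s((e x).1, (e y).1), (G.mem_edgeSet).2 h1, ?_⟩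
            show sym2Code n (Sym2.map g s((e x).1, (e y).1)) = C' s(x, y)
            rw [Sym2.map_pair_eq, hC'pair, if_neg (G.ne_of_adj h1)]
      · rintro c (⟨u, rfl⟩ | ⟨z, hz, rfl⟩)
        · refine ⟨s(e.symm (u, ⟨0, hdpos⟩), e.symm (u, ⟨1, hd1⟩)), ?_, ?_⟩
          · refine (G'.mem_edgeSet).2 ((hG'adj _ _).2 (Or.inl ?_))
            rw [e.apply_symm_apply, e.apply_symm_apply]
            exact ⟨rfl, by simp⟩
          · rw [hC'pair, e.apply_symm_apply, e.apply_symm_apply, if_pos rfl]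
        · revert hz
          induction z using Sym2.ind with
          | _ u v =>
            intro hz
            have hadj : G.Adj u v := (G.mem_edgeSet).1 hz
            refine ⟨s(e.symm (u, C s(u, v)), e.symm (v, C s(u, v))), ?_, ?_⟩
            · refine (G'.mem_edgeSet).2 ((hG'adj _ _).2 (Or.inr ?_))
              rw [e.apply_symm_apply, e.apply_symm_apply]
              exact ⟨hadj, rfl, rfl⟩
            · show C' _ = sym2Code n (Sym2.map g s(u, v))
              rw [hC'pair, e.apply_symm_apply, e.apply_symm_apply,
                if_neg (G.ne_of_adj hadj), Sym2.map_pair_eq]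
    have hfinA : (Set.range g).Finite := Set.finite_range g
    have hfinB : B.Finite := (Set.toFinite _).image _
    have hdisjAB : Disjoint (Set.range g) B := by
      rw [Set.disjoint_left]
      rintro a ⟨u, rfl⟩ ⟨z, hz, hzc⟩
      revert hzc
      induction z using Sym2.ind with
      | _ u' v' =>
        intro hzc
        simp only [Sym2.map_pair_eq] at hzc
        have := sym2Code_ge n (g u') (g v')
        rw [hzc] at this
        exact absurd this (not_le.2 (hglt u))
    have hcardA : (Set.range g).ncard = n := by
      rw [← Set.image_univ, Set.ncard_image_of_injective _ hginj, Set.ncard_univ,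
        Nat.card_eq_fintype_card]
    have hqinj : Set.InjOn (fun z => sym2Code n (Sym2.map g z)) G.edgeSet := by
      intro z hz z' hz' hzz
      revert hz hz' hzz
      induction z using Sym2.ind with
      | _ a b =>
        induction z' using Sym2.ind with
        | _ a' b' =>
          intro _ _ hzz
          simp only [Sym2.map_pair_eq] at hzz
          have h := sym2Code_inj (hglt a) (hglt b) (hglt a') (hglt b') hzz
          rw [Sym2.eq_iff] at h ⊢
          rcases h with ⟨h1, h2⟩ | ⟨h1, h2⟩
          · exact Or.inl ⟨hginj h1, hginj h2⟩
          · exact Or.inr ⟨hginj h1, hginj h2⟩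
    have hcardB : B.ncard = G.edgeSet.ncard := by
      rw [hB, Set.ncard_image_of_injOn hqinj]
    have hdeg : ∀ v, G.degree v = d := by
      intro v
      have h1 : Fintype.card (G.neighborSet v) = d := by
        rw [← Nat.card_eq_fintype_card, Nat.card_coe_set_eq, hreg v]
      rw [← G.card_neighborSet_eq_degree v, h1]
    have hnd : n * d = 2 * G.edgeFinset.card := by
      rw [← G.sum_degrees_eq_twice_card_edges]
      simp [hdeg, Finset.sum_const, hn, mul_comm]
    have hEcard : G.edgeSet.ncard = G.edgeFinset.card := by
      rw [← G.coe_edgeFinset, Set.ncard_coe_finset]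
    simp only [numColors]
    rw [hA, Set.ncard_union_eq hdisjAB hfinA hfinB, hcardA, hcardB, hEcard]
    omega
  exact ⟨G', hnbr, M, ⟨hsub, hdisj⟩, hperf, hcomp, C', h2col, hnum⟩
end

section
/- Let G be a finite simple graph, let C be an edge 2-coloring of G, and let χ be a characteristic subgraph of G with respect to C. If u and v are vertices that both have degree 2 in χ and uv is an edge of G, then uv is an edge of χ. -/
open SimpleGraph

/-! A characteristic subgraph has at most one edge of each color, so the two edges of `H` at a
vertex of `H`-degree 2 carry distinct colors and exhaust the at most two colors `G` shows there.
Hence the unique edge of `H` with the color of `uv` meets both `u` and `v`, so it is `uv`. -/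

section

variable {V : Type*} {G H : SimpleGraph V} {C : Sym2 V → ℕ}

theorem IsCharSubgraph.injOn_edgeSet (hH : IsCharSubgraph G C H) : Set.InjOn C H.edgeSet :=
  fun _ he₁ _ he₂ hC₁₂ =>
    (hH.2 _ ⟨_, edgeSet_mono hH.1 he₁, rfl⟩).unique ⟨he₁, rfl⟩ ⟨he₂, hC₁₂.symm⟩

theorem SimpleGraph.incidenceSet_mono (hle : H ≤ G) (w : V) :
    H.incidenceSet w ⊆ G.incidenceSet w :=
  fun _ he => ⟨edgeSet_mono hle he.1, he.2⟩

theorem SimpleGraph.ncard_image_incidenceSet_of_injOn {w : V} (hC : Set.InjOn C H.edgeSet) :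
    (C '' H.incidenceSet w).ncard = (H.neighborSet w).ncard := by
  classical
  rw [(hC.mono (H.incidenceSet_subset w)).ncard_image]
  exact Nat.card_congr (H.incidenceSetEquivNeighborSet w)

theorem IsCharSubgraph.image_incidenceSet_eq [Finite V] (hC : IsEdge2Coloring G C)
    (hH : IsCharSubgraph G C H) {w : V} (hw : (H.neighborSet w).ncard = 2) :
    C '' H.incidenceSet w = C '' G.incidenceSet w :=
  Set.eq_of_subset_of_ncard_le (Set.image_mono (incidenceSet_mono hH.1 w))
    (by rw [ncard_image_incidenceSet_of_injOn hH.injOn_edgeSet, hw]; exact hC w)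

theorem IsCharSubgraph.exists_mem_incidenceSet_color_eq [Finite V] (hC : IsEdge2Coloring G C)
    (hH : IsCharSubgraph G C H) {w x : V} (hw : (H.neighborSet w).ncard = 2)
    (hwx : G.Adj w x) : ∃ e ∈ H.incidenceSet w, C e = C s(w, x) := by
  rw [← Set.mem_image, hH.image_incidenceSet_eq hC hw]
  exact Set.mem_image_of_mem C (G.mk'_mem_incidenceSet_left_iff.mpr hwx)

end

/-- If `u` and `v` both have degree 2 in a characteristic subgraph `H` and `uv` is an edge
of `G`, then `uv` is an edge of `H`. -/
theorem deg_two_adj_mem_charSubgraph {V : Type*} [Fintype V] (G : SimpleGraph V)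
    (C : Sym2 V → ℕ) (hC : IsEdge2Coloring G C)
    (H : SimpleGraph V) (hH : IsCharSubgraph G C H) (u v : V)
    (hu : (H.neighborSet u).ncard = 2) (hv : (H.neighborSet v).ncard = 2)
    (huv : G.Adj u v) : H.Adj u v := by
  obtain ⟨e, ⟨he, hue⟩, hCe⟩ := hH.exists_mem_incidenceSet_color_eq hC hu huv
  obtain ⟨f, ⟨hf, hvf⟩, hCf⟩ := hH.exists_mem_incidenceSet_color_eq hC hv huv.symm
  have hef : e = f := hH.injOn_edgeSet he hf (by rw [hCe, hCf, Sym2.eq_swap])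
  have he_uv : e = s(u, v) := (Sym2.mem_and_mem_iff huv.ne).mp ⟨hue, hef ▸ hvf⟩
  rwa [he_uv] at he
end

section
/- Let G be a finite simple triangle-free graph, let C be an edge 2-coloring of G, and let χ be a characteristic subgraph of G with respect to C whose maximum degree is at most 2. Then every vertex of degree 0 in χ has at most 2 neighbors in G that have degree 2 in χ, and every vertex u of degree 1 in χ has at most 1 neighbor w in G such that w has degree 2 in χ and the edge uw is not an edge of χ. -/
open SimpleGraph

/-!
Distinct edges of a characteristic subgraph `H` have distinct colors, so at a vertex `w` of
`H`-degree 2 the two `H`-edges carry both colors seen at `w`, and every edge `uw` of `G` shares its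
color with an `H`-edge at `w`. If two edges `uw₁`, `uw₂` to such vertices had the same color, the
corresponding `H`-edges would coincide, so `w₁w₂` would be an edge and `uw₁w₂` a triangle. If an
edge `uw ∉ H` had the color of an `H`-edge `ux`, that `H`-edge would contain `u` and `w`, i.e. be
`uw`. As `u` sees at most two colors, pigeonhole on the edges at `u` gives both bounds.
-/

section

variable {V : Type*} {G : SimpleGraph V} {C : Sym2 V → ℕ} {H : SimpleGraph V}

theorem IsCharSubgraph.eq_of_color_eq (hH : IsCharSubgraph G C H) {e f : Sym2 V}
    (he : e ∈ H.edgeSet) (hf : f ∈ H.edgeSet) (hef : C e = C f) : e = f := by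
  obtain ⟨g, -, hg⟩ := hH.2 (C e) ⟨e, edgeSet_mono hH.1 he, rfl⟩
  rw [hg e ⟨he, rfl⟩, hg f ⟨hf, hef.symm⟩]

theorem IsEdge2Coloring.color_eq_or_eq_or_eq [Finite V] (hC : IsEdge2Coloring G C) {v a b c : V}
    (ha : G.Adj v a) (hb : G.Adj v b) (hc : G.Adj v c) :
    C s(v, a) = C s(v, b) ∨ C s(v, a) = C s(v, c) ∨ C s(v, b) = C s(v, c) := by
  have mem : ∀ {x}, G.Adj v x → C s(v, x) ∈ C '' G.incidenceSet v := fun hx =>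
    ⟨_, (G.mem_incidenceSet v _).mpr hx, rfl⟩
  by_contra! hne
  have := (Set.two_lt_ncard (Set.toFinite _)).mpr
    ⟨_, mem ha, _, mem hb, _, mem hc, hne.1, hne.2.1, hne.2.2⟩
  exact (hC v).not_gt this

theorem IsCharSubgraph.exists_adj_color_eq [Finite V] (hC : IsEdge2Coloring G C)
    (hH : IsCharSubgraph G C H) {u w : V} (huw : G.Adj u w)
    (hw : (H.neighborSet w).ncard = 2) : ∃ x, H.Adj w x ∧ C s(w, x) = C s(u, w) := by
  obtain ⟨a, b, hab, hset⟩ := Set.ncard_eq_two.mp hw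
  have ha : H.Adj w a := by rw [← H.mem_neighborSet, hset]; simp
  have hb : H.Adj w b := by rw [← H.mem_neighborSet, hset]; simp
  rw [Sym2.eq_swap]
  rcases hC.color_eq_or_eq_or_eq huw.symm (hH.1 ha) (hH.1 hb) with h | h | h
  · exact ⟨a, ha, h.symm⟩
  · exact ⟨b, hb, h.symm⟩
  · exact (hab (Sym2.congr_right.mp (hH.eq_of_color_eq ha hb h))).elim

theorem IsCharSubgraph.color_ne_of_ncard_neighborSet_eq_two [Finite V] (hfree : G.CliqueFree 3)
    (hC : IsEdge2Coloring G C) (hH : IsCharSubgraph G C H) {u w₁ w₂ : V}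
    (h₁ : G.Adj u w₁) (h₂ : G.Adj u w₂) (hw₁ : (H.neighborSet w₁).ncard = 2)
    (hw₂ : (H.neighborSet w₂).ncard = 2) (hne : w₁ ≠ w₂) : C s(u, w₁) ≠ C s(u, w₂) := by
  intro hcol
  obtain ⟨x₁, hx₁, hc₁⟩ := hH.exists_adj_color_eq hC h₁ hw₁
  obtain ⟨x₂, hx₂, hc₂⟩ := hH.exists_adj_color_eq hC h₂ hw₂
  have heq : s(w₁, x₁) = s(w₂, x₂) := hH.eq_of_color_eq hx₁ hx₂ (by rw [hc₁, hc₂, hcol])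
  rcases Sym2.mem_iff.mp (heq ▸ Sym2.mem_mk_left w₂ x₂ : w₂ ∈ s(w₁, x₁)) with h | h
  · exact hne h.symm
  · classical
    exact hfree {u, w₁, w₂} (is3Clique_triple_iff.mpr ⟨h₁, h₂, hH.1 (h ▸ hx₁)⟩)

theorem IsCharSubgraph.color_ne_of_not_adj [Finite V] (hC : IsEdge2Coloring G C)
    (hH : IsCharSubgraph G C H) {u w x : V} (huw : G.Adj u w)
    (hw : (H.neighborSet w).ncard = 2) (hnH : ¬ H.Adj u w) (hux : H.Adj u x) :
    C s(u, w) ≠ C s(u, x) := by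
  intro hcol
  obtain ⟨y, hy, hcy⟩ := hH.exists_adj_color_eq hC huw hw
  have heq : s(w, y) = s(u, x) := hH.eq_of_color_eq hy hux (hcy.trans hcol)
  rcases Sym2.mem_iff.mp (heq ▸ Sym2.mem_mk_left u x : u ∈ s(w, y)) with h | h
  · exact huw.ne h
  · exact hnH (h ▸ hy).symm

theorem IsCharSubgraph.ncard_adj_ncard_neighborSet_eq_two_le_two [Finite V]
    (hfree : G.CliqueFree 3) (hC : IsEdge2Coloring G C) (hH : IsCharSubgraph G C H) (u : V) :
    {w | G.Adj u w ∧ (H.neighborSet w).ncard = 2}.ncard ≤ 2 := by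
  by_contra! h
  obtain ⟨w₁, h₁, w₂, h₂, w₃, h₃, h₁₂, h₁₃, h₂₃⟩ := (Set.two_lt_ncard (Set.toFinite _)).mp h
  rcases hC.color_eq_or_eq_or_eq h₁.1 h₂.1 h₃.1 with h | h | h
  · exact hH.color_ne_of_ncard_neighborSet_eq_two hfree hC h₁.1 h₂.1 h₁.2 h₂.2 h₁₂ h
  · exact hH.color_ne_of_ncard_neighborSet_eq_two hfree hC h₁.1 h₃.1 h₁.2 h₃.2 h₁₃ h
  · exact hH.color_ne_of_ncard_neighborSet_eq_two hfree hC h₂.1 h₃.1 h₂.2 h₃.2 h₂₃ h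

theorem IsCharSubgraph.ncard_adj_ncard_neighborSet_eq_two_not_adj_le_one [Finite V]
    (hfree : G.CliqueFree 3) (hC : IsEdge2Coloring G C) (hH : IsCharSubgraph G C H)
    {u x : V} (hux : H.Adj u x) :
    {w | G.Adj u w ∧ (H.neighborSet w).ncard = 2 ∧ ¬ H.Adj u w}.ncard ≤ 1 := by
  by_contra! h
  obtain ⟨w₁, h₁, w₂, h₂, h₁₂⟩ := (Set.one_lt_ncard (Set.toFinite _)).mp h
  rcases hC.color_eq_or_eq_or_eq h₁.1 h₂.1 (hH.1 hux) with h | h | h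
  · exact hH.color_ne_of_ncard_neighborSet_eq_two hfree hC h₁.1 h₂.1 h₁.2.1 h₂.2.1 h₁₂ h
  · exact hH.color_ne_of_not_adj hC h₁.1 h₁.2.1 h₁.2.2 hux h
  · exact hH.color_ne_of_not_adj hC h₂.1 h₂.2.1 h₂.2.2 hux h

end

theorem charSubgraph_degree_bounds_triangleFree_general {V : Type*} [Fintype V] (G : SimpleGraph V)
    (hfree : G.CliqueFree 3)
    (C : Sym2 V → ℕ) (hC : IsEdge2Coloring G C)
    (H : SimpleGraph V) (hH : IsCharSubgraph G C H) :
    (∀ u : V, (H.neighborSet u).ncard = 0 →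
      ({w : V | G.Adj u w ∧ (H.neighborSet w).ncard = 2}).ncard ≤ 2) ∧
    (∀ u : V, (H.neighborSet u).ncard = 1 →
      ({w : V | G.Adj u w ∧ (H.neighborSet w).ncard = 2 ∧ ¬ H.Adj u w}).ncard ≤ 1) := by
  refine ⟨fun u _ => hH.ncard_adj_ncard_neighborSet_eq_two_le_two hfree hC u, fun u hu => ?_⟩
  obtain ⟨x, hx⟩ := Set.ncard_eq_one.mp hu
  exact hH.ncard_adj_ncard_neighborSet_eq_two_not_adj_le_one hfree hC
    (show x ∈ H.neighborSet u by rw [hx]; rfl)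

/-- In a characteristic subgraph `H` (max degree ≤ 2) of a triangle-free graph: a vertex of
degree 0 in `H` has at most 2 neighbors of degree 2 in `H`, and a vertex of degree 1 in `H`
has at most 1 neighbor of degree 2 in `H` through an edge not in `H`. -/
theorem charSubgraph_degree_bounds_triangleFree {V : Type*} [Fintype V] (G : SimpleGraph V)
    (hfree : G.CliqueFree 3)
    (C : Sym2 V → ℕ) (hC : IsEdge2Coloring G C)
    (H : SimpleGraph V) (hH : IsCharSubgraph G C H)
    (hdeg : ∀ v : V, (H.neighborSet v).ncard ≤ 2) :
    (∀ u : V, (H.neighborSet u).ncard = 0 →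
      ({w : V | G.Adj u w ∧ (H.neighborSet w).ncard = 2}).ncard ≤ 2) ∧
    (∀ u : V, (H.neighborSet u).ncard = 1 →
      ({w : V | G.Adj u w ∧ (H.neighborSet w).ncard = 2 ∧ ¬ H.Adj u w}).ncard ≤ 1) :=
  charSubgraph_degree_bounds_triangleFree_general G hfree C hC H hH
end

section
/- Let G be a finite simple graph and let M be a matching in G. Then G admits an edge 2-coloring in which every edge of M receives its own distinct color and, for each connected component of G − M containing at least one edge, all edges of that component receive one common fresh color. Consequently, OPT(G) ≥ |M| + (the number of connected components of G − M that contain at least one edge). -/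
/-!
Label the edges of `M` and the components of `G − M` injectively by natural numbers, and color
each matching edge by its own label and every other edge by the label of its component. A vertex
lies on at most one matching edge and in exactly one component of `G − M`, so it sees at most two
colors, while the number of colors used is `|M|` plus the number of components carrying an edge.
-/

open SimpleGraph

lemma IsMatchingSet.subsingleton_incident {V : Type*} {G : SimpleGraph V} {M : Set (Sym2 V)}
    (hM : IsMatchingSet G M) (v : V) : {e ∈ M | v ∈ e}.Subsingleton := by
  rintro e ⟨he, hve⟩ f ⟨hf, hvf⟩
  by_contra hne
  exact hM.2 e he f hf hne v hve hvf

lemma IsEdge2Coloring.numColors_le_OPT {V : Type*} [Finite V] {G : SimpleGraph V}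
    {C : Sym2 V → ℕ} (hC : IsEdge2Coloring G C) : numColors G C ≤ OPT G := by
  refine le_csSup ⟨Nat.card (Sym2 V), ?_⟩ ⟨C, hC, rfl⟩
  rintro n ⟨C', -, rfl⟩
  exact (Set.ncard_image_le (Set.toFinite _)).trans (Set.ncard_le_card _)

namespace SimpleGraph

variable {V : Type*} (G : SimpleGraph V)

def edgeComponents : Set G.ConnectedComponent :=
  {c | ∃ a b : V, G.Adj a b ∧ G.connectedComponentMk a = c}

variable {G}

lemma connectedComponentMk_eq_of_mem_edge {a b x : V} (hab : G.Adj a b) (hx : x ∈ s(a, b)) :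
    G.connectedComponentMk x = G.connectedComponentMk a := by
  obtain rfl | rfl := Sym2.mem_iff.mp hx
  exacts [rfl, (ConnectedComponent.connectedComponentMk_eq_of_adj hab).symm]

end SimpleGraph

section MatchingColoring

variable {V : Type*} (G : SimpleGraph V) (M : Set (Sym2 V))
  (ι : Sym2 V ⊕ (G.deleteEdges M).ConnectedComponent → ℕ)

open Classical in
/-- `Quot.out` picks an arbitrary endpoint; this is harmless on edges of `G − M`, whose endpoints
lie in the same component. -/
noncomputable def matchingColoring (e : Sym2 V) : ℕ :=
  if e ∈ M then ι (.inl e) else ι (.inr ((G.deleteEdges M).connectedComponentMk e.out.1))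

variable {G M ι}

lemma matchingColoring_of_mem {e : Sym2 V} (he : e ∈ M) :
    matchingColoring G M ι e = ι (.inl e) := by
  simp [matchingColoring, he]

lemma matchingColoring_of_adj {a b : V} (hab : (G.deleteEdges M).Adj a b) :
    matchingColoring G M ι s(a, b) = ι (.inr ((G.deleteEdges M).connectedComponentMk a)) := by
  have hnM : s(a, b) ∉ M := ((deleteEdges_adj ..).mp hab).2
  simp only [matchingColoring, if_neg hnM,
    connectedComponentMk_eq_of_mem_edge hab (Sym2.out_fst_mem _)]

lemma matchingColoring_of_mem_edgeSet_deleteEdges {e : Sym2 V} {v : V}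
    (he : e ∈ (G.deleteEdges M).edgeSet) (hv : v ∈ e) :
    matchingColoring G M ι e = ι (.inr ((G.deleteEdges M).connectedComponentMk v)) := by
  induction e using Sym2.ind with
  | _ a b =>
    rw [matchingColoring_of_adj he, connectedComponentMk_eq_of_mem_edge he hv]

lemma matchingColoring_isEdge2Coloring [Finite V] (hM : IsMatchingSet G M) :
    IsEdge2Coloring G (matchingColoring G M ι) := by
  intro v
  have hsub : matchingColoring G M ι '' G.incidenceSet v ⊆
      insert (ι (.inr ((G.deleteEdges M).connectedComponentMk v)))
        (matchingColoring G M ι '' {e ∈ M | v ∈ e}) := by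
    rintro _ ⟨e, ⟨heG, hve⟩, rfl⟩
    by_cases heM : e ∈ M
    · exact Or.inr ⟨e, ⟨heM, hve⟩, rfl⟩
    · have he : e ∈ (G.deleteEdges M).edgeSet := by
        rw [edgeSet_deleteEdges]
        exact ⟨heG, heM⟩
      exact Or.inl (matchingColoring_of_mem_edgeSet_deleteEdges he hve)
  have hmatch : (matchingColoring G M ι '' {e ∈ M | v ∈ e}).ncard ≤ 1 :=
    Set.ncard_le_one_iff_subsingleton.mpr ((hM.subsingleton_incident v).image _)
  calc (matchingColoring G M ι '' G.incidenceSet v).ncard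
      ≤ (insert _ (matchingColoring G M ι '' {e ∈ M | v ∈ e})).ncard := Set.ncard_le_ncard hsub
    _ ≤ _ + 1 := Set.ncard_insert_le _ _
    _ ≤ 2 := by omega

lemma image_matchingColoring_edgeSet (hM : M ⊆ G.edgeSet) :
    matchingColoring G M ι '' G.edgeSet =
      ι '' (Sum.inl '' M ∪ Sum.inr '' (G.deleteEdges M).edgeComponents) := by
  have hsplit : G.edgeSet = M ∪ (G.deleteEdges M).edgeSet := by
    rw [edgeSet_deleteEdges, Set.union_sdiff_cancel hM]
  have hM_image : matchingColoring G M ι '' M = ι '' (Sum.inl '' M) := by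
    rw [Set.image_image]
    exact Set.image_congr fun e he => matchingColoring_of_mem he
  have hrest_image : matchingColoring G M ι '' (G.deleteEdges M).edgeSet =
      ι '' (Sum.inr '' (G.deleteEdges M).edgeComponents) := by
    ext c
    constructor
    · rintro ⟨e, he, rfl⟩
      induction e using Sym2.ind with
      | _ a b => exact ⟨_, ⟨_, ⟨a, b, he, rfl⟩, rfl⟩, (matchingColoring_of_adj he).symm⟩
    · rintro ⟨_, ⟨_, ⟨a, b, hab, rfl⟩, rfl⟩, rfl⟩
      exact ⟨s(a, b), hab, matchingColoring_of_adj hab⟩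
  rw [hsplit, Set.image_union, Set.image_union, hM_image, hrest_image]

lemma numColors_matchingColoring [Finite V] (hM : M ⊆ G.edgeSet) (hι : Function.Injective ι) :
    numColors G (matchingColoring G M ι) = M.ncard + (G.deleteEdges M).edgeComponents.ncard := by
  rw [numColors, image_matchingColoring_edgeSet hM, Set.ncard_image_of_injective _ hι,
    Set.ncard_union_eq Set.disjoint_image_inl_image_inr,
    Set.ncard_image_of_injective _ Sum.inl_injective,
    Set.ncard_image_of_injective _ Sum.inr_injective]

lemma matchingColoring_injOn (hι : Function.Injective ι) :
    Set.InjOn (matchingColoring G M ι) M := fun e he f hf h => by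
  rw [matchingColoring_of_mem he, matchingColoring_of_mem hf] at h
  exact Sum.inl_injective (hι h)

lemma matchingColoring_ne_of_mem_of_notMem (hι : Function.Injective ι) {e f : Sym2 V}
    (he : e ∈ M) (hf : f ∈ G.edgeSet) (hfM : f ∉ M) :
    matchingColoring G M ι e ≠ matchingColoring G M ι f := by
  have hf' : f ∈ (G.deleteEdges M).edgeSet := by
    rw [edgeSet_deleteEdges]
    exact ⟨hf, hfM⟩
  rw [matchingColoring_of_mem he, matchingColoring_of_mem_edgeSet_deleteEdges hf' f.out_fst_mem,
    hι.ne_iff]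
  exact Sum.inl_ne_inr

lemma matchingColoring_eq_iff_reachable (hι : Function.Injective ι) {a b a' b' : V}
    (hab : (G.deleteEdges M).Adj a b) (hab' : (G.deleteEdges M).Adj a' b') :
    matchingColoring G M ι s(a, b) = matchingColoring G M ι s(a', b') ↔
      (G.deleteEdges M).Reachable a a' := by
  rw [matchingColoring_of_adj hab, matchingColoring_of_adj hab', hι.eq_iff, Sum.inr.injEq,
    ConnectedComponent.eq]

end MatchingColoring

/-- Any matching `M` of `G` extends to an edge 2-coloring giving each edge of `M` its own
color and each edge-containing component of `G − M` a common fresh color; consequently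
`OPT(G) ≥ |M| +` (number of components of `G − M` containing an edge). -/
theorem matching_coloring_lower_bound {V : Type*} [Fintype V] (G : SimpleGraph V)
    (M : Set (Sym2 V)) (hM : IsMatchingSet G M) :
    (∃ C : Sym2 V → ℕ, IsEdge2Coloring G C ∧
      (∀ e ∈ M, ∀ f ∈ M, C e = C f → e = f) ∧
      (∀ e ∈ M, ∀ f ∈ G.edgeSet, f ∉ M → C e ≠ C f) ∧
      (∀ a b a' b' : V, (G.deleteEdges M).Adj a b → (G.deleteEdges M).Adj a' b' →
        ((G.deleteEdges M).Reachable a a' ↔ C s(a, b) = C s(a', b')))) ∧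
    M.ncard + Nat.card {c : (G.deleteEdges M).ConnectedComponent //
      ∃ a b : V, (G.deleteEdges M).Adj a b ∧ (G.deleteEdges M).connectedComponentMk a = c}
      ≤ OPT G := by
  obtain ⟨ι, hι⟩ :=
    Countable.exists_injective_nat (Sym2 V ⊕ (G.deleteEdges M).ConnectedComponent)
  have hcol : IsEdge2Coloring G (matchingColoring G M ι) := matchingColoring_isEdge2Coloring hM
  refine ⟨⟨matchingColoring G M ι, hcol, fun e he f hf => matchingColoring_injOn hι he hf,
    fun e he f hf hfM => matchingColoring_ne_of_mem_of_notMem hι he hf hfM,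
    fun a b a' b' hab hab' => (matchingColoring_eq_iff_reachable hι hab hab').symm⟩, ?_⟩
  calc _ = numColors G (matchingColoring G M ι) := by
        rw [numColors_matchingColoring hM.1 hι, ← Nat.card_coe_set_eq]
        rfl
    _ ≤ OPT G := hcol.numColors_le_OPT
end
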